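/- arXiv:1901.00279 — 10 statements merged into one kernel-verified Lean document; each statement's English description precedes it below -/
import Mathlib

section
/- Let Assumption 1 hold (for every i, the map ℓ_{y_i} : q ↦ ℓ(q, y_i) is differentiable on ℝ^{d_y}, convex, and nonnegative) and let λ > 0. Then at every local minimum (θ, a, b, W) ∈ ℝ^{d_θ} × ℝ^{d_y} × ℝ^{d_y} × ℝ^{d_x × d_y} of the modified objective L̃, the parameter θ is a global minimum of the original objective L, i.e., L(θ) ≤ L(θ') for all θ' ∈ ℝ^{d_θ}. -/
/-!
At a local minimum, the derivatives of `L̃` in `aₖ` and in `bₖ` are `Sₖ + 2λaₖ` and `aₖSₖ`,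
where `Sₖ = ∑ᵢ exp(⟨wₖ, xᵢ⟩ + bₖ) cᵢₖ` and `cᵢₖ` is the `k`-th partial derivative of `ℓ_{yᵢ}` at
the network output; both vanish, so `λaₖ² = 0` and `a = 0`. Then `L̃` no longer depends on `W`,
so every nearby `(θ, 0, b, W')` is again a local minimum, and the `aₖ`-condition there says that
`w ↦ ∑ᵢ cᵢₖ exp⟨w, xᵢ⟩` vanishes near `wₖ`. Exponentials with distinct exponents are linearly
independent (restrict to a line along which the `xᵢ` have distinct projections, differentiate
at `0` and use a Vandermonde argument), so the gradients of the `ℓ_{yᵢ}` cancel over each group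
of equal inputs. Since `f(xᵢ; θ') - f(xᵢ; θ)` depends only on `xᵢ`, the first-order variation of
`L` from `θ` towards any `θ'` vanishes, and convexity turns this into `L θ ≤ L θ'`.
-/

open scoped RealInnerProductSpace

noncomputable section

/-- The added neuron: `g(x; a, b, W)ₖ = aₖ · exp(⟨wₖ, x⟩ + bₖ)`. -/
def addedNeuron (dx dy : ℕ) (a b : EuclideanSpace ℝ (Fin dy))
    (W : Fin dy → EuclideanSpace ℝ (Fin dx)) (x : EuclideanSpace ℝ (Fin dx)) :
    EuclideanSpace ℝ (Fin dy) :=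
  WithLp.toLp 2 (fun k => a k * Real.exp (⟪W k, x⟫ + b k))

open Filter Topology Finset

theorem ConvexOn.add_fderiv_sub_le {E : Type*} [NormedAddCommGroup E] [NormedSpace ℝ E]
    {f : E → ℝ} (hf : ConvexOn ℝ Set.univ f) {q : E} (hd : DifferentiableAt ℝ f q) (p : E) :
    f q + fderiv ℝ f q (p - q) ≤ f p := by
  have hline : ConvexOn ℝ Set.univ (f ∘ AffineMap.lineMap (k := ℝ) q p) := by
    simpa using hf.comp_affineMap (AffineMap.lineMap q p)
  have hderiv : HasDerivAt (f ∘ AffineMap.lineMap (k := ℝ) q p) (fderiv ℝ f q (p - q)) 0 :=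
    HasFDerivAt.comp_hasDerivAt (x := 0) (by simpa using hd.hasFDerivAt)
      AffineMap.hasDerivAt_lineMap
  have := hline.le_slope_of_hasDerivAt (Set.mem_univ 0) (Set.mem_univ 1) one_pos hderiv
  simp only [slope_def_field, Function.comp_apply, AffineMap.lineMap_apply_zero,
    AffineMap.lineMap_apply_one, sub_zero, div_one] at this
  linarith

theorem IsLocalMin.eventually_isLocalMin_of_eq {X : Type*} [TopologicalSpace X] {f : X → ℝ}
    {a : X} (h : IsLocalMin f a) : ∀ᶠ b in 𝓝 a, f b = f a → IsLocalMin f b := by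
  filter_upwards [eventually_eventually_nhds.mpr h] with b hb hba
  exact hb.mono fun c hc => hba ▸ hc

theorem Set.Finite.exists_injOn_inner {E : Type*} [NormedAddCommGroup E] [InnerProductSpace ℝ E]
    {s : Set E} (hs : s.Finite) : ∃ u : E, Set.InjOn (inner ℝ u) s := by
  have : Finite s := hs
  by_contra! h
  simp only [Set.InjOn, not_forall] at h
  obtain ⟨⟨⟨v, w⟩, hvw⟩, hp⟩ := Subspace.exists_eq_top_of_iUnion_eq_univ
    (p := fun p : {p : s × s // p.1 ≠ p.2} => (ℝ ∙ ((p.1.1 : E) - p.1.2))ᗮ) <| by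
    refine Set.eq_univ_of_forall fun u => ?_
    obtain ⟨v, hv, w, hw, huvw, hne⟩ := h u
    refine Set.mem_iUnion.mpr ⟨⟨(⟨v, hv⟩, ⟨w, hw⟩), by simpa using hne⟩, ?_⟩
    simp [Submodule.mem_orthogonal_singleton_iff_inner_left, inner_sub_right, huvw]
  simp only [Submodule.orthogonal_eq_top_iff, Submodule.span_singleton_eq_bot, sub_eq_zero] at hp
  exact hvw (Subtype.ext hp)

open Polynomial in
theorem Finset.sum_filter_eq_zero_of_forall_sum_mul_pow_eq_zero {ι K : Type*} [Fintype ι]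
    [Field K] [DecidableEq K] {d β : ι → K} (h : ∀ n : ℕ, ∑ i, d i * β i ^ n = 0) (r : K) :
    ∑ i with β i = r, d i = 0 := by
  have heval : ∀ p : K[X], ∑ i, d i * p.eval (β i) = 0 := by
    intro p
    induction p using Polynomial.induction_on' with
    | add p q hp hq => simp [mul_add, sum_add_distrib, hp, hq]
    | monomial n a => simp [mul_left_comm _ a, ← mul_sum, h]
  set p : K[X] := ∏ s ∈ (univ.image β).erase r, (X - C s)
  have hvanish : ∀ i, β i ≠ r → p.eval (β i) = 0 := fun i hi => by
    simp [p, eval_prod, prod_eq_zero_iff, sub_eq_zero, hi]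
  have hr : p.eval r ≠ 0 := by
    simp [p, eval_prod, prod_eq_zero_iff, sub_eq_zero]
  have := heval p
  rw [← sum_filter_add_sum_filter_not univ (β · = r),
    sum_eq_zero (s := {i | β i ≠ r}) fun i hi => by rw [hvanish i (mem_filter.mp hi).2, mul_zero],
    add_zero, sum_congr rfl fun i hi => by rw [(mem_filter.mp hi).2], ← sum_mul] at this
  exact (mul_eq_zero.mp this).resolve_right hr

theorem sum_mul_pow_eq_zero_of_eventually_sum_mul_exp_eq_zero {ι : Type*} [Fintype ι]
    {d β : ι → ℝ} (h : ∀ᶠ t in 𝓝 0, ∑ i, d i * Real.exp (β i * t) = 0) (n : ℕ) :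
    ∑ i, d i * β i ^ n = 0 := by
  suffices hn : (fun t => ∑ i, d i * β i ^ n * Real.exp (β i * t)) =ᶠ[𝓝 0] 0 by
    simpa using hn.eq_of_nhds
  induction n with
  | zero => simpa [EventuallyEq] using h
  | succ n ih =>
    have hderiv : deriv (fun t => ∑ i, d i * β i ^ n * Real.exp (β i * t))
        = fun t => ∑ i, d i * β i ^ (n + 1) * Real.exp (β i * t) := by
      funext t
      refine (HasDerivAt.fun_sum fun i _ => ?_).deriv
      have := (((hasDerivAt_id t).const_mul (β i)).exp).const_mul (d i * β i ^ n)
      exact this.congr_deriv (by simp only [id, pow_succ]; ring)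
    simpa [hderiv] using ih.deriv

theorem sum_filter_eq_zero_of_eventually_sum_mul_exp_inner_eq_zero {ι E : Type*} [Fintype ι]
    [NormedAddCommGroup E] [InnerProductSpace ℝ E] [DecidableEq E] {c : ι → ℝ} {x : ι → E}
    {w₀ : E} (h : ∀ᶠ w in 𝓝 w₀, ∑ i, c i * Real.exp ⟪w, x i⟫ = 0) (z : E) :
    ∑ i with x i = z, c i = 0 := by
  obtain ⟨u, hu⟩ := (Set.finite_range x).exists_injOn_inner
  have hline : ∀ᶠ t in 𝓝 (0 : ℝ),
      ∑ i, c i * Real.exp ⟪w₀, x i⟫ * Real.exp (⟪u, x i⟫ * t) = 0 := by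
    have hcont : Tendsto (fun t : ℝ => w₀ + t • u) (𝓝 0) (𝓝 w₀) :=
      (continuous_const.add (continuous_id.smul continuous_const)).tendsto' _ _ (by simp)
    filter_upwards [hcont.eventually h] with t ht
    simpa [inner_add_left, real_inner_smul_left, Real.exp_add, mul_assoc, mul_comm t] using ht
  obtain ⟨j, rfl⟩ | hz := em (z ∈ Set.range x)
  · have hfiber := sum_filter_eq_zero_of_forall_sum_mul_pow_eq_zero
      (sum_mul_pow_eq_zero_of_eventually_sum_mul_exp_eq_zero hline) ⟪u, x j⟫
    rw [filter_congr fun i _ => (hu.eq_iff (Set.mem_range_self i) (Set.mem_range_self j)),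
      sum_congr rfl fun i hi => by rw [(mem_filter.mp hi).2], ← sum_mul] at hfiber
    exact (mul_eq_zero.mp hfiber).resolve_right (Real.exp_ne_zero _)
  · exact sum_eq_zero fun i hi => absurd ⟨i, (mem_filter.mp hi).2⟩ hz

section

variable {dx dy : ℕ} (a b : EuclideanSpace ℝ (Fin dy)) (W : Fin dy → EuclideanSpace ℝ (Fin dx))
  (x : EuclideanSpace ℝ (Fin dx)) (k : Fin dy)

@[simp]
theorem addedNeuron_zero_scale : addedNeuron dx dy 0 b W x = 0 := by
  ext; simp [addedNeuron]

theorem addedNeuron_add_smul_single_scale (t : ℝ) :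
    addedNeuron dx dy (a + t • EuclideanSpace.single k 1) b W x =
      addedNeuron dx dy a b W x + (t * Real.exp (⟪W k, x⟫ + b k)) • EuclideanSpace.single k 1 := by
  ext j
  obtain rfl | hj := eq_or_ne j k <;> simp [addedNeuron, *, add_mul]

theorem addedNeuron_add_smul_single_bias (t : ℝ) :
    addedNeuron dx dy a (b + t • EuclideanSpace.single k 1) W x =
      addedNeuron dx dy a b W x +
        (a k * Real.exp (⟪W k, x⟫ + b k) * (Real.exp t - 1)) • EuclideanSpace.single k 1 := by
  ext j
  obtain rfl | hj := eq_or_ne j k <;> simp [addedNeuron, *, Real.exp_add]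
  ring

theorem hasDerivAt_addedNeuron_add_smul_single_scale :
    HasDerivAt (fun t : ℝ => addedNeuron dx dy (a + t • EuclideanSpace.single k 1) b W x)
      (Real.exp (⟪W k, x⟫ + b k) • EuclideanSpace.single k 1) 0 := by
  simp only [addedNeuron_add_smul_single_scale]
  simpa using (((hasDerivAt_id (0 : ℝ)).mul_const (Real.exp (⟪W k, x⟫ + b k))).smul_const
    (EuclideanSpace.single k (1 : ℝ))).const_add (addedNeuron dx dy a b W x)

theorem hasDerivAt_addedNeuron_add_smul_single_bias :
    HasDerivAt (fun t : ℝ => addedNeuron dx dy a (b + t • EuclideanSpace.single k 1) W x)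
      ((a k * Real.exp (⟪W k, x⟫ + b k)) • EuclideanSpace.single k 1) 0 := by
  simp only [addedNeuron_add_smul_single_bias]
  simpa using ((((Real.hasDerivAt_exp 0).sub_const 1).const_mul
    (a k * Real.exp (⟪W k, x⟫ + b k))).smul_const
    (EuclideanSpace.single k (1 : ℝ))).const_add (addedNeuron dx dy a b W x)

end

/-- `L̃` as a function of `(a, b, W)` for fixed `θ`, with `h i q = ℓ (f (x i) θ + q) (y i) / m`. -/
def addedNeuronObjective {dx dy : ℕ} {ι : Type*} [Fintype ι]
    (h : ι → EuclideanSpace ℝ (Fin dy) → ℝ) (x : ι → EuclideanSpace ℝ (Fin dx)) (lam : ℝ)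
    (p : EuclideanSpace ℝ (Fin dy) × EuclideanSpace ℝ (Fin dy) ×
      (Fin dy → EuclideanSpace ℝ (Fin dx))) : ℝ :=
  ∑ i, h i (addedNeuron dx dy p.1 p.2.1 p.2.2 (x i)) + lam * ‖p.1‖ ^ 2

section

variable {dx dy : ℕ} {ι : Type*} [Fintype ι] {h : ι → EuclideanSpace ℝ (Fin dy) → ℝ}
  {x : ι → EuclideanSpace ℝ (Fin dx)} {lam : ℝ} {a b : EuclideanSpace ℝ (Fin dy)}
  {W : Fin dy → EuclideanSpace ℝ (Fin dx)} (k : Fin dy)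

theorem hasDerivAt_addedNeuronObjective_add_smul_single_scale
    (hh : ∀ i, Differentiable ℝ (h i)) :
    HasDerivAt
      (fun t : ℝ => addedNeuronObjective h x lam (a + t • EuclideanSpace.single k 1, b, W))
      (∑ i, Real.exp (⟪W k, x i⟫ + b k) *
          fderiv ℝ (h i) (addedNeuron dx dy a b W (x i)) (EuclideanSpace.single k 1) +
        2 * lam * a k) 0 := by
  refine HasDerivAt.add (HasDerivAt.fun_sum fun i _ => ?_) ?_
  · simpa [Function.comp_def] using (hh i _).hasFDerivAt.comp_hasDerivAt_of_eq 0
      (hasDerivAt_addedNeuron_add_smul_single_scale a b W (x i) k) (by simp)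
  · have hline : HasDerivAt (fun t : ℝ => a + t • EuclideanSpace.single k 1)
        (EuclideanSpace.single k 1) 0 := by
      simpa using ((hasDerivAt_id (0 : ℝ)).smul_const (EuclideanSpace.single k (1 : ℝ))).const_add a
    simpa [EuclideanSpace.inner_single_right, mul_assoc, mul_left_comm] using
      hline.norm_sq.const_mul lam

theorem hasDerivAt_addedNeuronObjective_add_smul_single_bias
    (hh : ∀ i, Differentiable ℝ (h i)) :
    HasDerivAt
      (fun t : ℝ => addedNeuronObjective h x lam (a, b + t • EuclideanSpace.single k 1, W))
      (a k * ∑ i, Real.exp (⟪W k, x i⟫ + b k) *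
          fderiv ℝ (h i) (addedNeuron dx dy a b W (x i)) (EuclideanSpace.single k 1)) 0 := by
  rw [mul_sum, ← add_zero (∑ i, _)]
  have hconst : HasDerivAt (fun _ : ℝ => lam * ‖a‖ ^ 2) 0 0 := hasDerivAt_const _ _
  refine HasDerivAt.add (HasDerivAt.fun_sum fun i _ => ?_) hconst
  simpa [Function.comp_def, mul_assoc] using (hh i _).hasFDerivAt.comp_hasDerivAt_of_eq 0
    (hasDerivAt_addedNeuron_add_smul_single_bias a b W (x i) k) (by simp)

theorem IsLocalMin.sum_exp_mul_fderiv_add_eq_zero (hh : ∀ i, Differentiable ℝ (h i))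
    (hmin : IsLocalMin (addedNeuronObjective h x lam) (a, b, W)) :
    ∑ i, Real.exp (⟪W k, x i⟫ + b k) *
        fderiv ℝ (h i) (addedNeuron dx dy a b W (x i)) (EuclideanSpace.single k 1) +
      2 * lam * a k = 0 := by
  have h0 : IsLocalMin (addedNeuronObjective h x lam)
      (a + (0 : ℝ) • EuclideanSpace.single k 1, b, W) := by simpa using hmin
  exact (h0.comp_continuous (g := fun t : ℝ => (a + t • EuclideanSpace.single k 1, b, W))
    (by fun_prop)).hasDerivAt_eq_zero
    (hasDerivAt_addedNeuronObjective_add_smul_single_scale k hh)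

theorem IsLocalMin.addedNeuron_scale_eq_zero (hh : ∀ i, Differentiable ℝ (h i)) (hlam : 0 < lam)
    (hmin : IsLocalMin (addedNeuronObjective h x lam) (a, b, W)) : a = 0 := by
  ext k
  have hA := hmin.sum_exp_mul_fderiv_add_eq_zero k hh
  have h0 : IsLocalMin (addedNeuronObjective h x lam)
      (a, b + (0 : ℝ) • EuclideanSpace.single k 1, W) := by simpa using hmin
  have hB := (h0.comp_continuous (g := fun t : ℝ => (a, b + t • EuclideanSpace.single k 1, W))
    (by fun_prop)).hasDerivAt_eq_zero
    (hasDerivAt_addedNeuronObjective_add_smul_single_bias k hh)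
  have : lam * a k ^ 2 = 0 := by linear_combination (a k * hA - hB) / 2
  simpa [hlam.ne'] using this

theorem IsLocalMin.sum_filter_fderiv_zero_eq_zero (hh : ∀ i, Differentiable ℝ (h i))
    (hlam : 0 < lam) (hmin : IsLocalMin (addedNeuronObjective h x lam) (a, b, W))
    (z : EuclideanSpace ℝ (Fin dx)) :
    ∑ i with x i = z, fderiv ℝ (h i) 0 (EuclideanSpace.single k 1) = 0 := by
  obtain rfl := hmin.addedNeuron_scale_eq_zero hh hlam
  have hconst : ∀ W', addedNeuronObjective h x lam (0, b, W') = ∑ i, h i 0 := by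
    simp [addedNeuronObjective]
  have hnear : ∀ᶠ w in 𝓝 (W k),
      IsLocalMin (addedNeuronObjective h x lam) (0, b, Function.update W k w) := by
    have hg : Tendsto (fun w => ((0 : EuclideanSpace ℝ (Fin dy)), b, Function.update W k w))
        (𝓝 (W k)) (𝓝 (0, b, W)) := by
      simpa using (by fun_prop : Continuous fun w =>
        ((0 : EuclideanSpace ℝ (Fin dy)), b, Function.update W k w)).tendsto (W k)
    filter_upwards [hg.eventually hmin.eventually_isLocalMin_of_eq] with w hw
    exact hw (by rw [hconst, hconst])
  have hsum : ∀ᶠ w in 𝓝 (W k), ∑ i,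
      fderiv ℝ (h i) 0 (EuclideanSpace.single k 1) * Real.exp (b k) * Real.exp ⟪w, x i⟫ = 0 := by
    filter_upwards [hnear] with w hw
    simpa [Real.exp_add, mul_comm, mul_left_comm, mul_assoc] using
      hw.sum_exp_mul_fderiv_add_eq_zero k hh
  have := sum_filter_eq_zero_of_eventually_sum_mul_exp_inner_eq_zero hsum z
  rw [← sum_mul] at this
  exact (mul_eq_zero.mp this).resolve_right (Real.exp_ne_zero _)

theorem IsLocalMin.sum_apply_zero_le_sum_apply_comp (hh : ∀ i, Differentiable ℝ (h i))
    (hconv : ∀ i, ConvexOn ℝ Set.univ (h i)) (hlam : 0 < lam)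
    (hmin : IsLocalMin (addedNeuronObjective h x lam) (a, b, W))
    (v : EuclideanSpace ℝ (Fin dx) → EuclideanSpace ℝ (Fin dy)) :
    ∑ i, h i 0 ≤ ∑ i, h i (v (x i)) := by
  have hfiber : ∀ z, ∑ i with x i = z, fderiv ℝ (h i) 0 = 0 := fun z =>
    ContinuousLinearMap.coe_injective <|
      (EuclideanSpace.basisFun (Fin dy) ℝ).toBasis.ext fun k => by
        simpa using hmin.sum_filter_fderiv_zero_eq_zero k hh hlam z
  have hgrad : ∑ i, fderiv ℝ (h i) 0 (v (x i)) = 0 := by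
    rw [← sum_fiberwise_of_maps_to (t := univ.image x) fun i _ => mem_image_of_mem x (mem_univ i)]
    refine sum_eq_zero fun z _ => ?_
    rw [sum_congr rfl fun i hi => by rw [(mem_filter.mp hi).2], ← _root_.sum_apply,
      hfiber, zero_apply]
  calc ∑ i, h i 0 = ∑ i, (h i 0 + fderiv ℝ (h i) 0 (v (x i) - 0)) := by
        simp [sum_add_distrib, hgrad]
    _ ≤ ∑ i, h i (v (x i)) := sum_le_sum fun i _ => (hconv i).add_fderiv_sub_le (hh i 0) _

end

theorem elimination_global_min_general
    (m dx dy dθ : ℕ)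
    (x : Fin m → EuclideanSpace ℝ (Fin dx))
    (y : Fin m → EuclideanSpace ℝ (Fin dy))
    (f : EuclideanSpace ℝ (Fin dx) → EuclideanSpace ℝ (Fin dθ) → EuclideanSpace ℝ (Fin dy))
    (ℓ : EuclideanSpace ℝ (Fin dy) → EuclideanSpace ℝ (Fin dy) → ℝ)
    -- Assumption 1: each ℓ_{y_i} is differentiable, convex and nonnegative
    (hdiff : ∀ i : Fin m, Differentiable ℝ (fun q => ℓ q (y i)))
    (hconv : ∀ i : Fin m, ConvexOn ℝ Set.univ (fun q => ℓ q (y i)))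
    (lam : ℝ) (hlam : 0 < lam)
    -- the original objective L
    (L : EuclideanSpace ℝ (Fin dθ) → ℝ)
    (hL : ∀ θ, L θ = (1 / (m : ℝ)) * ∑ i, ℓ (f (x i) θ) (y i))
    -- the modified objective L̃
    (Lt : EuclideanSpace ℝ (Fin dθ) → EuclideanSpace ℝ (Fin dy) → EuclideanSpace ℝ (Fin dy) →
      (Fin dy → EuclideanSpace ℝ (Fin dx)) → ℝ)
    (hLt : ∀ θ a b W, Lt θ a b W =
      (1 / (m : ℝ)) * ∑ i, ℓ (f (x i) θ + addedNeuron dx dy a b W (x i)) (y i)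
        + lam * ‖a‖ ^ 2)
    (θ : EuclideanSpace ℝ (Fin dθ)) (a b : EuclideanSpace ℝ (Fin dy))
    (W : Fin dy → EuclideanSpace ℝ (Fin dx))
    (hmin : IsLocalMin (fun p : EuclideanSpace ℝ (Fin dθ) × EuclideanSpace ℝ (Fin dy) ×
        EuclideanSpace ℝ (Fin dy) × (Fin dy → EuclideanSpace ℝ (Fin dx)) =>
        Lt p.1 p.2.1 p.2.2.1 p.2.2.2) (θ, a, b, W)) :
    ∀ θ' : EuclideanSpace ℝ (Fin dθ), L θ ≤ L θ' := by
  set h : Fin m → EuclideanSpace ℝ (Fin dy) → ℝ := fun i q => 1 / (m : ℝ) * ℓ (f (x i) θ + q) (y i)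
  have hh : ∀ i, Differentiable ℝ (h i) := fun i =>
    ((hdiff i).comp ((differentiable_const _).add differentiable_id)).const_mul _
  have hconvh : ∀ i, ConvexOn ℝ Set.univ (h i) := fun i =>
    ((hconv i).translate_right (f (x i) θ)).smul (c := 1 / (m : ℝ)) (by positivity)
  have hobj : addedNeuronObjective h x lam = fun p => Lt θ p.1 p.2.1 p.2.2 :=
    funext fun p => by simp [addedNeuronObjective, hLt, h, mul_sum]
  have hminh : IsLocalMin (addedNeuronObjective h x lam) (a, b, W) :=
    hobj ▸ hmin.comp_continuous (g := fun p => (θ, p)) (by fun_prop)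
  intro θ'
  simpa [hL, mul_sum, h] using
    hminh.sum_apply_zero_le_sum_apply_comp hh hconvh hlam fun z => f z θ' - f z θ

/-- Under Assumption 1 (each `ℓ_{y_i}` is differentiable, convex and
nonnegative) and `λ > 0`, at every local minimum `(θ, a, b, W)` of the modified
objective `L̃`, the parameter `θ` is a global minimum of the original objective `L`. -/
theorem elimination_global_min
    (m dx dy dθ : ℕ) (hm : 0 < m) (hdx : 0 < dx) (hdy : 0 < dy) (hdθ : 0 < dθ)
    (x : Fin m → EuclideanSpace ℝ (Fin dx))
    (y : Fin m → EuclideanSpace ℝ (Fin dy))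
    (f : EuclideanSpace ℝ (Fin dx) → EuclideanSpace ℝ (Fin dθ) → EuclideanSpace ℝ (Fin dy))
    (ℓ : EuclideanSpace ℝ (Fin dy) → EuclideanSpace ℝ (Fin dy) → ℝ)
    -- Assumption 1: each ℓ_{y_i} is differentiable, convex and nonnegative
    (hdiff : ∀ i : Fin m, Differentiable ℝ (fun q => ℓ q (y i)))
    (hconv : ∀ i : Fin m, ConvexOn ℝ Set.univ (fun q => ℓ q (y i)))
    (hnonneg : ∀ (i : Fin m) (q : EuclideanSpace ℝ (Fin dy)), 0 ≤ ℓ q (y i))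
    (lam : ℝ) (hlam : 0 < lam)
    -- the original objective L
    (L : EuclideanSpace ℝ (Fin dθ) → ℝ)
    (hL : ∀ θ, L θ = (1 / (m : ℝ)) * ∑ i, ℓ (f (x i) θ) (y i))
    -- the modified objective L̃
    (Lt : EuclideanSpace ℝ (Fin dθ) → EuclideanSpace ℝ (Fin dy) → EuclideanSpace ℝ (Fin dy) →
      (Fin dy → EuclideanSpace ℝ (Fin dx)) → ℝ)
    (hLt : ∀ θ a b W, Lt θ a b W =
      (1 / (m : ℝ)) * ∑ i, ℓ (f (x i) θ + addedNeuron dx dy a b W (x i)) (y i)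
        + lam * ‖a‖ ^ 2)
    (θ : EuclideanSpace ℝ (Fin dθ)) (a b : EuclideanSpace ℝ (Fin dy))
    (W : Fin dy → EuclideanSpace ℝ (Fin dx))
    (hmin : IsLocalMin (fun p : EuclideanSpace ℝ (Fin dθ) × EuclideanSpace ℝ (Fin dy) ×
        EuclideanSpace ℝ (Fin dy) × (Fin dy → EuclideanSpace ℝ (Fin dx)) =>
        Lt p.1 p.2.1 p.2.2.1 p.2.2.2) (θ, a, b, W)) :
    ∀ θ' : EuclideanSpace ℝ (Fin dθ), L θ ≤ L θ' :=
  elimination_global_min_general m dx dy dθ x y f ℓ hdiff hconv lam hlam L hL Lt hLt θ a b W hmin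
end
end

section
/- Let Assumption 1 hold (for every i, the map ℓ_{y_i} : q ↦ ℓ(q, y_i) is differentiable on ℝ^{d_y}, convex, and nonnegative) and let λ > 0. Then at every local minimum (θ, a, b, W) of the modified objective L̃, one has a = 0; consequently g(x;a,b,W) = 0 for all x ∈ ℝ^{d_x}, the modified network output f(x;θ) + g(x;a,b,W) equals f(x;θ) for all x ∈ ℝ^{d_x}, and L̃(θ,a,b,W) = L(θ). -/
open scoped RealInnerProductSpace

noncomputable section

/-!
The added neuron has a scaling symmetry: shrinking `a` by `e⁻ᵗ` while shifting every `bₖ`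
by `t` leaves `g` unchanged, but multiplies the regulariser `λ‖a‖²` by `e⁻²ᵗ`. Along this
curve `L̃` is therefore strictly decreasing unless `a = 0`, which rules out a local minimum.
-/

theorem not_isLocalMin_of_strictAnti {α β : Type*} [TopologicalSpace α] [LinearOrder α]
    [OrderTopology α] [DenselyOrdered α] [NoMaxOrder α] [Preorder β] {φ : α → β}
    (hφ : StrictAnti φ) (x : α) : ¬IsLocalMin φ x := by
  intro hmin
  obtain ⟨t, hle, hxt⟩ :=
    ((hmin.filter_mono nhdsWithin_le_nhds).and (self_mem_nhdsWithin (s := Set.Ioi x))).exists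
  exact (hφ hxt).not_ge hle

section AddedNeuron

variable {dx dy : ℕ}

theorem addedNeuron_zero_left (b : EuclideanSpace ℝ (Fin dy))
    (W : Fin dy → EuclideanSpace ℝ (Fin dx)) (x : EuclideanSpace ℝ (Fin dx)) :
    addedNeuron dx dy 0 b W x = 0 := by
  ext k
  simp [addedNeuron]

theorem addedNeuron_exp_neg_smul_add_const (a b : EuclideanSpace ℝ (Fin dy))
    (W : Fin dy → EuclideanSpace ℝ (Fin dx)) (t : ℝ) :
    addedNeuron dx dy (Real.exp (-t) • a) (b + WithLp.toLp 2 (fun _ => t)) W =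
      addedNeuron dx dy a b W := by
  funext x
  ext k
  simp only [addedNeuron, PiLp.smul_apply, PiLp.add_apply, smul_eq_mul, ← add_assoc,
    Real.exp_add, Real.exp_neg]
  field_simp

end AddedNeuron

theorem norm_smul_sq {E : Type*} [SeminormedAddCommGroup E] [NormedSpace ℝ E]
    (c : ℝ) (a : E) : ‖c • a‖ ^ 2 = c ^ 2 * ‖a‖ ^ 2 := by
  rw [norm_smul, mul_pow, Real.norm_eq_abs, sq_abs]

theorem strictAnti_const_add_mul_exp_neg_sq {C c : ℝ} (hc : 0 < c) :
    StrictAnti fun t : ℝ => C + c * Real.exp (-t) ^ 2 := by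
  intro s t hst
  dsimp only
  gcongr

theorem elimination_added_neuron_vanishes_general
    (m dx dy dθ : ℕ)
    (x : Fin m → EuclideanSpace ℝ (Fin dx))
    (y : Fin m → EuclideanSpace ℝ (Fin dy))
    (f : EuclideanSpace ℝ (Fin dx) → EuclideanSpace ℝ (Fin dθ) → EuclideanSpace ℝ (Fin dy))
    (ℓ : EuclideanSpace ℝ (Fin dy) → EuclideanSpace ℝ (Fin dy) → ℝ)
    (lam : ℝ) (hlam : 0 < lam)
    -- the original objective L
    (L : EuclideanSpace ℝ (Fin dθ) → ℝ)
    (hL : ∀ θ, L θ = (1 / (m : ℝ)) * ∑ i, ℓ (f (x i) θ) (y i))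
    -- the modified objective L̃
    (Lt : EuclideanSpace ℝ (Fin dθ) → EuclideanSpace ℝ (Fin dy) → EuclideanSpace ℝ (Fin dy) →
      (Fin dy → EuclideanSpace ℝ (Fin dx)) → ℝ)
    (hLt : ∀ θ a b W, Lt θ a b W =
      (1 / (m : ℝ)) * ∑ i, ℓ (f (x i) θ + addedNeuron dx dy a b W (x i)) (y i)
        + lam * ‖a‖ ^ 2)
    (θ : EuclideanSpace ℝ (Fin dθ)) (a b : EuclideanSpace ℝ (Fin dy))
    (W : Fin dy → EuclideanSpace ℝ (Fin dx))
    (hmin : IsLocalMin (fun p : EuclideanSpace ℝ (Fin dθ) × EuclideanSpace ℝ (Fin dy) ×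
        EuclideanSpace ℝ (Fin dy) × (Fin dy → EuclideanSpace ℝ (Fin dx)) =>
        Lt p.1 p.2.1 p.2.2.1 p.2.2.2) (θ, a, b, W)) :
    a = 0 ∧
    (∀ x' : EuclideanSpace ℝ (Fin dx), addedNeuron dx dy a b W x' = 0) ∧
    (∀ x' : EuclideanSpace ℝ (Fin dx),
      f x' θ + addedNeuron dx dy a b W x' = f x' θ) ∧
    Lt θ a b W = L θ := by
  let curve : ℝ → _ := fun t => (θ, Real.exp (-t) • a, b + WithLp.toLp 2 (fun _ => t), W)
  have hcurve_zero : curve 0 = (θ, a, b, W) := by ext <;> simp [curve]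
  have hmin_curve : IsLocalMin (fun t => Lt θ (Real.exp (-t) • a)
      (b + WithLp.toLp 2 (fun _ => t)) W) 0 :=
    (hcurve_zero ▸ hmin).comp_continuous (by fun_prop)
  have ha : a = 0 := by
    by_contra ha
    refine not_isLocalMin_of_strictAnti
      (strictAnti_const_add_mul_exp_neg_sq (C := Lt θ a b W - lam * ‖a‖ ^ 2) (c := lam * ‖a‖ ^ 2)
        (by positivity)) 0 ?_
    convert hmin_curve using 2 with t
    simp only [hLt, addedNeuron_exp_neg_smul_add_const, norm_smul_sq]
    ring
  subst ha
  refine ⟨rfl, addedNeuron_zero_left b W, fun x' => by rw [addedNeuron_zero_left, add_zero], ?_⟩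
  simp [hLt, hL, addedNeuron_zero_left]

/-- Under Assumption 1 and `λ > 0`, at every local minimum `(θ, a, b, W)`
of the modified objective `L̃`, one has `a = 0`; consequently the added neuron vanishes
everywhere, the modified network equals the original one, and `L̃(θ,a,b,W) = L(θ)`. -/
theorem elimination_added_neuron_vanishes
    (m dx dy dθ : ℕ) (hm : 0 < m) (hdx : 0 < dx) (hdy : 0 < dy) (hdθ : 0 < dθ)
    (x : Fin m → EuclideanSpace ℝ (Fin dx))
    (y : Fin m → EuclideanSpace ℝ (Fin dy))
    (f : EuclideanSpace ℝ (Fin dx) → EuclideanSpace ℝ (Fin dθ) → EuclideanSpace ℝ (Fin dy))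
    (ℓ : EuclideanSpace ℝ (Fin dy) → EuclideanSpace ℝ (Fin dy) → ℝ)
    -- Assumption 1: each ℓ_{y_i} is differentiable, convex and nonnegative
    (hdiff : ∀ i : Fin m, Differentiable ℝ (fun q => ℓ q (y i)))
    (hconv : ∀ i : Fin m, ConvexOn ℝ Set.univ (fun q => ℓ q (y i)))
    (hnonneg : ∀ (i : Fin m) (q : EuclideanSpace ℝ (Fin dy)), 0 ≤ ℓ q (y i))
    (lam : ℝ) (hlam : 0 < lam)
    -- the original objective L
    (L : EuclideanSpace ℝ (Fin dθ) → ℝ)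
    (hL : ∀ θ, L θ = (1 / (m : ℝ)) * ∑ i, ℓ (f (x i) θ) (y i))
    -- the modified objective L̃
    (Lt : EuclideanSpace ℝ (Fin dθ) → EuclideanSpace ℝ (Fin dy) → EuclideanSpace ℝ (Fin dy) →
      (Fin dy → EuclideanSpace ℝ (Fin dx)) → ℝ)
    (hLt : ∀ θ a b W, Lt θ a b W =
      (1 / (m : ℝ)) * ∑ i, ℓ (f (x i) θ + addedNeuron dx dy a b W (x i)) (y i)
        + lam * ‖a‖ ^ 2)
    (θ : EuclideanSpace ℝ (Fin dθ)) (a b : EuclideanSpace ℝ (Fin dy))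
    (W : Fin dy → EuclideanSpace ℝ (Fin dx))
    (hmin : IsLocalMin (fun p : EuclideanSpace ℝ (Fin dθ) × EuclideanSpace ℝ (Fin dy) ×
        EuclideanSpace ℝ (Fin dy) × (Fin dy → EuclideanSpace ℝ (Fin dx)) =>
        Lt p.1 p.2.1 p.2.2.1 p.2.2.2) (θ, a, b, W)) :
    a = 0 ∧
    (∀ x' : EuclideanSpace ℝ (Fin dx), addedNeuron dx dy a b W x' = 0) ∧
    (∀ x' : EuclideanSpace ℝ (Fin dx),
      f x' θ + addedNeuron dx dy a b W x' = f x' θ) ∧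
    Lt θ a b W = L θ :=
  elimination_added_neuron_vanishes_general m dx dy dθ x y f ℓ lam hlam L hL Lt hLt θ a b W hmin
end
end

section
/- (PGB necessary condition of local minima, equality case ρ = 1.) Let Q(z) = (1/m)·∑_{i=1}^m [Q_i(φ_i(z)) + R_i(ψ_i(z))], where each Q_i : ℝ^{d_φ} → ℝ and R_i : ℝ^{d_ψ} → ℝ is differentiable, convex, and nonnegative, and each φ_i and ψ_i is differentiable. Assume there exists h : ℝ^{d_z} → ℝ^{d_z} such that for all i and all z: φ_i(z) = ∑_{k=1}^{d_z} h(z)_k·∂_k φ_i(z) and ψ_i(z) = ∑_{k=1}^{d_z} h(z)_k·∂_k ψ_i(z). Then for every local minimum z of Q there exists ε₀ > 0 such that for every ε ∈ [0, ε₀), Q(z) equals the infimum, over all finite lists S of vectors in V[z,ε] and all α ∈ ℝ^{d_z × |S|}, of (1/m)·∑_{i=1}^m [Q_i(φ_i^z(α,ε,S)) + R_i(ψ_i^z(α,ε,S))]. -/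
/-!
By convexity, `Qᵢ a ≥ Qᵢ (φᵢ z) + DQᵢ(φᵢ z)(a - φᵢ z)`, and likewise for `Rᵢ`. A point
`w = z + ε v` with `v ∈ V[z,ε]` has `φᵢ w = φᵢ z`, `ψᵢ w = ψᵢ z`, hence `Q w = Q z`; for `ε`
below the radius of local minimality it is again a local minimum. Its first-order condition has
its outer derivatives at `φᵢ w = φᵢ z`, so it is linear in the inner derivatives at `w`, and the
first-order term at `z` vanishes on every `(φᵢᶻ(α,ε,S), ψᵢᶻ(α,ε,S))`, and by the identity for
`h` also on `(φᵢ z, ψᵢ z)`. Convexity then gives `Q z ≤` every value of the infimum, and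
`S = (0)`, `α = h z` attains `Q z`.
-/

open Finset Metric

variable {E F G : Type*}
  [NormedAddCommGroup E] [NormedSpace ℝ E]
  [NormedAddCommGroup F] [NormedSpace ℝ F]
  [NormedAddCommGroup G] [NormedSpace ℝ G]

theorem ConvexOn.add_fderiv_sub_le_s4 {f : F → ℝ} (hd : Differentiable ℝ f)
    (hc : ConvexOn ℝ Set.univ f) (x y : F) :
    f x + fderiv ℝ f x (y - x) ≤ f y := by
  set g : ℝ → ℝ := f ∘ AffineMap.lineMap x y with hg
  have hgc : ConvexOn ℝ Set.univ g := hc.comp_affineMap (AffineMap.lineMap x y)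
  have hgd : HasDerivAt g (fderiv ℝ f x (y - x)) 0 := by
    have hline : HasDerivAt (fun t : ℝ => AffineMap.lineMap x y t) (y - x) 0 := by
      simpa [AffineMap.lineMap_apply_module'] using
        ((hasDerivAt_id (0 : ℝ)).smul_const (y - x)).add_const x
    exact (hd _).hasFDerivAt.comp_hasDerivAt_of_eq 0 hline (by simp)
  have hslope := hgc.le_slope_of_hasDerivAt (Set.mem_univ 0) (Set.mem_univ 1) one_pos hgd
  rw [slope_def_field] at hslope
  simp only [hg, Function.comp_apply, AffineMap.lineMap_apply_zero,
    AffineMap.lineMap_apply_one] at hslope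
  linarith

theorem isLocalMin_of_forall_mem_ball {X β : Type*} [PseudoMetricSpace X] [Preorder β]
    {f : X → β} {z w : X} {r : ℝ}
    (hmin : ∀ y ∈ ball z r, f z ≤ f y) (hw : w ∈ ball z r) (hfw : f w = f z) :
    IsLocalMin f w :=
  IsMinOn.isLocalMin (fun y hy => hfw ▸ hmin y hy) (isOpen_ball.mem_nhds hw)

section Objective

variable {ι : Type*} [Fintype ι] {f : ι → F → ℝ} {g : ι → G → ℝ} {φ : ι → E → F}
  {ψ : ι → E → G}

theorem sum_add_le_sum_add_of_sum_fderiv_le (hfd : ∀ i, Differentiable ℝ (f i))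
    (hfc : ∀ i, ConvexOn ℝ Set.univ (f i)) (hgd : ∀ i, Differentiable ℝ (g i))
    (hgc : ∀ i, ConvexOn ℝ Set.univ (g i)) (x a : ι → F) (y b : ι → G)
    (h : ∑ i, (fderiv ℝ (f i) (x i) (x i) + fderiv ℝ (g i) (y i) (y i)) ≤
      ∑ i, (fderiv ℝ (f i) (x i) (a i) + fderiv ℝ (g i) (y i) (b i))) :
    ∑ i, (f i (x i) + g i (y i)) ≤ ∑ i, (f i (a i) + g i (b i)) :=
  calc ∑ i, (f i (x i) + g i (y i))
      ≤ ∑ i, (f i (x i) + g i (y i)) +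
          (∑ i, (fderiv ℝ (f i) (x i) (a i) + fderiv ℝ (g i) (y i) (b i)) -
            ∑ i, (fderiv ℝ (f i) (x i) (x i) + fderiv ℝ (g i) (y i) (y i))) := by linarith
    _ = ∑ i, ((f i (x i) + fderiv ℝ (f i) (x i) (a i - x i)) +
          (g i (y i) + fderiv ℝ (g i) (y i) (b i - y i))) := by
      simp only [map_sub, sum_add_distrib, sum_sub_distrib]
      ring
    _ ≤ ∑ i, (f i (a i) + g i (b i)) := sum_le_sum fun i _ =>
      add_le_add ((hfc i).add_fderiv_sub_le_s4 (hfd i) _ _) ((hgc i).add_fderiv_sub_le_s4 (hgd i) _ _)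

theorem hasFDerivAt_sum_comp_add_comp (hfd : ∀ i, Differentiable ℝ (f i))
    (hgd : ∀ i, Differentiable ℝ (g i)) (hφd : ∀ i, Differentiable ℝ (φ i))
    (hψd : ∀ i, Differentiable ℝ (ψ i)) (w : E) :
    HasFDerivAt (fun y => ∑ i, (f i (φ i y) + g i (ψ i y)))
      (∑ i, ((fderiv ℝ (f i) (φ i w)).comp (fderiv ℝ (φ i) w) +
        (fderiv ℝ (g i) (ψ i w)).comp (fderiv ℝ (ψ i) w))) w :=
  HasFDerivAt.fun_sum fun i _ =>
    ((hfd i _).hasFDerivAt.comp w (hφd i w).hasFDerivAt).add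
      ((hgd i _).hasFDerivAt.comp w (hψd i w).hasFDerivAt)

theorem IsLocalMin.sum_fderiv_comp_eq_zero (hfd : ∀ i, Differentiable ℝ (f i))
    (hgd : ∀ i, Differentiable ℝ (g i)) (hφd : ∀ i, Differentiable ℝ (φ i))
    (hψd : ∀ i, Differentiable ℝ (ψ i)) {z w : E}
    (hmin : IsLocalMin (fun y => ∑ i, (f i (φ i y) + g i (ψ i y))) w)
    (hφw : ∀ i, φ i w = φ i z) (hψw : ∀ i, ψ i w = ψ i z) (v : E) :
    ∑ i, (fderiv ℝ (f i) (φ i z) (fderiv ℝ (φ i) w v) +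
      fderiv ℝ (g i) (ψ i z) (fderiv ℝ (ψ i) w v)) = 0 := by
  have hzero := hmin.hasFDerivAt_eq_zero (hasFDerivAt_sum_comp_add_comp hfd hgd hφd hψd w)
  simpa [hφw, hψw] using DFunLike.congr_fun hzero v

theorem sum_fderiv_apply_add_eq_zero {T : Type*} [Fintype T] (L : ι → F →L[ℝ] ℝ)
    (M : ι → G →L[ℝ] ℝ) (c : T → ℝ) (w u : T → E)
    (hcrit : ∀ t v, ∑ i, (L i (fderiv ℝ (φ i) (w t) v) + M i (fderiv ℝ (ψ i) (w t) v)) = 0)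
    (x : ι → F) (y : ι → G) (hx : ∀ i, x i = ∑ t, c t • fderiv ℝ (φ i) (w t) (u t))
    (hy : ∀ i, y i = ∑ t, c t • fderiv ℝ (ψ i) (w t) (u t)) :
    ∑ i, (L i (x i) + M i (y i)) = 0 :=
  calc ∑ i, (L i (x i) + M i (y i))
      = ∑ t, c t * ∑ i, (L i (fderiv ℝ (φ i) (w t) (u t)) +
          M i (fderiv ℝ (ψ i) (w t) (u t))) := by
        simp only [hx, hy, map_sum, map_smul, smul_eq_mul, mul_sum, mul_add, ← sum_add_distrib]
        exact sum_comm
    _ = 0 := by simp [hcrit]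

end Objective

theorem pgb_necessary_condition_equality_general
    (m dz dphi dpsi : ℕ) (hm : 0 < m)
    (Qi : Fin m → EuclideanSpace ℝ (Fin dphi) → ℝ)
    (Ri : Fin m → EuclideanSpace ℝ (Fin dpsi) → ℝ)
    (φ : Fin m → EuclideanSpace ℝ (Fin dz) → EuclideanSpace ℝ (Fin dphi))
    (ψ : Fin m → EuclideanSpace ℝ (Fin dz) → EuclideanSpace ℝ (Fin dpsi))
    (hQd : ∀ i, Differentiable ℝ (Qi i))
    (hQc : ∀ i, ConvexOn ℝ Set.univ (Qi i))
    (hRd : ∀ i, Differentiable ℝ (Ri i))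
    (hRc : ∀ i, ConvexOn ℝ Set.univ (Ri i))
    (hφd : ∀ i, Differentiable ℝ (φ i))
    (hψd : ∀ i, Differentiable ℝ (ψ i))
    (h : EuclideanSpace ℝ (Fin dz) → EuclideanSpace ℝ (Fin dz))
    (hhφ : ∀ i z, φ i z = ∑ k, h z k • fderiv ℝ (φ i) z (EuclideanSpace.single k 1))
    (hhψ : ∀ i z, ψ i z = ∑ k, h z k • fderiv ℝ (ψ i) z (EuclideanSpace.single k 1))
    (Q : EuclideanSpace ℝ (Fin dz) → ℝ)
    (hQ : ∀ z, Q z = (1 / (m : ℝ)) * ∑ i, (Qi i (φ i z) + Ri i (ψ i z)))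
    (z : EuclideanSpace ℝ (Fin dz)) (hz : IsLocalMin Q z) :
    ∃ ε₀ > (0 : ℝ), ∀ ε : ℝ, 0 ≤ ε → ε < ε₀ →
      Q z = sInf {r : ℝ | ∃ (s : ℕ) (S : Fin s → EuclideanSpace ℝ (Fin dz))
          (α : Fin dz → Fin s → ℝ),
        (∀ j, ‖S j‖ ≤ 1 ∧ ∀ i, φ i (z + ε • S j) = φ i z ∧ ψ i (z + ε • S j) = ψ i z) ∧
        r = (1 / (m : ℝ)) * ∑ i,
              (Qi i (∑ k, ∑ j, α k j •
                  fderiv ℝ (φ i) (z + ε • S j) (EuclideanSpace.single k 1)) +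
               Ri i (∑ k, ∑ j, α k j •
                  fderiv ℝ (ψ i) (z + ε • S j) (EuclideanSpace.single k 1)))} := by
  set F := fun y => ∑ i, (Qi i (φ i y) + Ri i (ψ i y))
  have hzF : IsLocalMin F z := by
    filter_upwards [hz] with y hy
    rw [hQ, hQ] at hy
    exact le_of_mul_le_mul_left hy (by positivity)
  obtain ⟨r, hr, hball⟩ := eventually_nhds_iff_ball.mp hzF
  refine ⟨r, hr, fun ε hε hεr => (IsLeast.csInf_eq ⟨?_, ?_⟩).symm⟩
  · refine ⟨1, fun _ => 0, fun k _ => h z k, fun _ => by simp, ?_⟩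
    simp [hQ, ← hhφ, ← hhψ]
  rintro _ ⟨s, S, α, hS, rfl⟩
  have hcrit_z (_ : Fin dz) := hzF.sum_fderiv_comp_eq_zero hQd hRd hφd hψd
    (fun _ => rfl) (fun _ => rfl)
  have hcrit_S (j : Fin s) (v : EuclideanSpace ℝ (Fin dz)) :
      ∑ i, (fderiv ℝ (Qi i) (φ i z) (fderiv ℝ (φ i) (z + ε • S j) v) +
        fderiv ℝ (Ri i) (ψ i z) (fderiv ℝ (ψ i) (z + ε • S j) v)) = 0 := by
    have hmem : z + ε • S j ∈ ball z r := by
      rw [mem_ball, dist_eq_norm, add_sub_cancel_left, norm_smul, Real.norm_of_nonneg hε]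
      nlinarith [(hS j).1, norm_nonneg (S j)]
    refine IsLocalMin.sum_fderiv_comp_eq_zero hQd hRd hφd hψd
      (isLocalMin_of_forall_mem_ball hball hmem ?_) (fun i => ((hS j).2 i).1)
      (fun i => ((hS j).2 i).2) v
    simp only [((hS j).2 _).1, ((hS j).2 _).2]
  rw [hQ]
  refine mul_le_mul_of_nonneg_left ?_ (by positivity)
  refine sum_add_le_sum_add_of_sum_fderiv_le hQd hQc hRd hRc _ _ _ _ (le_of_eq ?_)
  rw [sum_fderiv_apply_add_eq_zero _ _ (h z) (fun _ => z) _ hcrit_z _ _ (hhφ · z) (hhψ · z),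
    sum_fderiv_apply_add_eq_zero _ _ (fun p : Fin dz × Fin s => α p.1 p.2)
      (fun p => z + ε • S p.2) _ (fun p => hcrit_S p.2) _ _
      (fun _ => (Fintype.sum_prod_type' _).symm) (fun _ => (Fintype.sum_prod_type' _).symm)]

/-- **PGB necessary condition of local minima, equality case `ρ = 1`.**
For `Q(z) = (1/m) ∑ᵢ [Qᵢ(φᵢ(z)) + Rᵢ(ψᵢ(z))]` with `Qᵢ, Rᵢ` differentiable, convex and
nonnegative, `φᵢ, ψᵢ` differentiable, and assuming
`φᵢ(z) = ∑ₖ h(z)ₖ ∂ₖφᵢ(z)` and `ψᵢ(z) = ∑ₖ h(z)ₖ ∂ₖψᵢ(z)` for some `h`,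
every local minimum `z` of `Q` satisfies: there is `ε₀ > 0` such that for all
`ε ∈ [0, ε₀)`, `Q(z)` equals the infimum over all finite lists `S` of vectors in
`V[z,ε]` and all `α` of `(1/m) ∑ᵢ [Qᵢ(φᵢᶻ(α,ε,S)) + Rᵢ(ψᵢᶻ(α,ε,S))]`. -/
theorem pgb_necessary_condition_equality
    (m dz dphi dpsi : ℕ) (hm : 0 < m)
    (Qi : Fin m → EuclideanSpace ℝ (Fin dphi) → ℝ)
    (Ri : Fin m → EuclideanSpace ℝ (Fin dpsi) → ℝ)
    (φ : Fin m → EuclideanSpace ℝ (Fin dz) → EuclideanSpace ℝ (Fin dphi))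
    (ψ : Fin m → EuclideanSpace ℝ (Fin dz) → EuclideanSpace ℝ (Fin dpsi))
    (hQd : ∀ i, Differentiable ℝ (Qi i))
    (hQc : ∀ i, ConvexOn ℝ Set.univ (Qi i))
    (hQ0 : ∀ i q, 0 ≤ Qi i q)
    (hRd : ∀ i, Differentiable ℝ (Ri i))
    (hRc : ∀ i, ConvexOn ℝ Set.univ (Ri i))
    (hR0 : ∀ i q, 0 ≤ Ri i q)
    (hφd : ∀ i, Differentiable ℝ (φ i))
    (hψd : ∀ i, Differentiable ℝ (ψ i))
    (h : EuclideanSpace ℝ (Fin dz) → EuclideanSpace ℝ (Fin dz))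
    (hhφ : ∀ i z, φ i z = ∑ k, h z k • fderiv ℝ (φ i) z (EuclideanSpace.single k 1))
    (hhψ : ∀ i z, ψ i z = ∑ k, h z k • fderiv ℝ (ψ i) z (EuclideanSpace.single k 1))
    (Q : EuclideanSpace ℝ (Fin dz) → ℝ)
    (hQ : ∀ z, Q z = (1 / (m : ℝ)) * ∑ i, (Qi i (φ i z) + Ri i (ψ i z)))
    (z : EuclideanSpace ℝ (Fin dz)) (hz : IsLocalMin Q z) :
    ∃ ε₀ > (0 : ℝ), ∀ ε : ℝ, 0 ≤ ε → ε < ε₀ →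
      Q z = sInf {r : ℝ | ∃ (s : ℕ) (S : Fin s → EuclideanSpace ℝ (Fin dz))
          (α : Fin dz → Fin s → ℝ),
        (∀ j, ‖S j‖ ≤ 1 ∧ ∀ i, φ i (z + ε • S j) = φ i z ∧ ψ i (z + ε • S j) = ψ i z) ∧
        r = (1 / (m : ℝ)) * ∑ i,
              (Qi i (∑ k, ∑ j, α k j •
                  fderiv ℝ (φ i) (z + ε • S j) (EuclideanSpace.single k 1)) +
               Ri i (∑ k, ∑ j, α k j •
                  fderiv ℝ (ψ i) (z + ε • S j) (EuclideanSpace.single k 1)))} :=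
  pgb_necessary_condition_equality_general m dz dphi dpsi hm Qi Ri φ ψ hQd hQc hRd hRc hφd hψd h hhφ
    hhψ Q hQ z hz
end

section
/- (Failure mode, existence part.) There exist positive integers m, d_x, d_θ (with d_y = 1), a loss criterion ℓ : ℝ × ℝ → ℝ such that q ↦ ℓ(q, y) is differentiable, convex, and nonnegative for every y, a differentiable function f : ℝ^{d_x} × ℝ^{d_θ} → ℝ, data (x_i, y_i)_{i=1}^m, λ > 0, and a parameter θ ∈ ℝ^{d_θ} such that: θ is a stationary point of L (the gradient of L at θ is zero), θ is not a global minimum of L, and for every (a, b, W) ∈ ℝ × ℝ × ℝ^{d_x}, the gradient of the map θ' ↦ L̃(θ', a, b, W) at θ' = θ is zero. -/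
/-!
Take `f(x; θ) = θ³` with one parameter, the squared loss and a single sample `(0, 1)`.
At `θ = 0` the network has zero derivative in `θ`, so by the chain rule every objective of the
form `θ' ↦ ℓ(f(x; θ') + c, y)` is stationary there, whatever the shift `c = g(x; a, b, w)`;
yet `L(0) = 1 > 0 = L(1)`.
-/

open scoped RealInnerProductSpace

lemma gradient_eq_zero_of_hasFDerivAt_zero {E : Type*} [NormedAddCommGroup E]
    [InnerProductSpace ℝ E] [CompleteSpace E] {F : E → ℝ} {θ : E}
    (hF : HasFDerivAt F (0 : E →L[ℝ] ℝ) θ) : gradient F θ = 0 :=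
  HasGradientAt.gradient (hasGradientAt_iff_hasFDerivAt.mpr (by simpa using hF))

lemma hasFDerivAt_scaled_sum_comp_zero {E ι : Type*} [NormedAddCommGroup E] [NormedSpace ℝ E]
    [Fintype ι] (ℓ : ι → ℝ → ℝ) (g : ι → E → ℝ) {θ : E}
    (hg : ∀ i, HasFDerivAt (g i) (0 : E →L[ℝ] ℝ) θ)
    (hℓ : ∀ i, DifferentiableAt ℝ (ℓ i) (g i θ)) (c : ℝ) :
    HasFDerivAt (fun θ' => c * ∑ i, ℓ i (g i θ')) (0 : E →L[ℝ] ℝ) θ := by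
  have hterm : ∀ i ∈ Finset.univ,
      HasFDerivAt (fun θ' => ℓ i (g i θ')) (0 : E →L[ℝ] ℝ) θ := fun i _ => by
    have h := (hℓ i).hasFDerivAt.comp θ (hg i)
    rwa [ContinuousLinearMap.comp_zero] at h
  simpa using (HasFDerivAt.fun_sum hterm).const_mul c

lemma hasFDerivAt_coord_pow_zero {ι : Type*} [Fintype ι] (i : ι) {n : ℕ} (hn : 2 ≤ n) :
    HasFDerivAt (fun θ : EuclideanSpace ℝ ι => θ i ^ n) (0 : EuclideanSpace ℝ ι →L[ℝ] ℝ) 0 := by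
  have hpow : HasDerivAt (fun t : ℝ => t ^ n) 0 0 := by
    simpa [zero_pow (by omega : n - 1 ≠ 0)] using hasDerivAt_pow n (0 : ℝ)
  have h := hpow.hasFDerivAt.comp (0 : EuclideanSpace ℝ ι)
    (EuclideanSpace.proj i : EuclideanSpace ℝ ι →L[ℝ] ℝ).hasFDerivAt
  rwa [ContinuousLinearMap.toSpanSingleton_zero, ContinuousLinearMap.zero_comp] at h

lemma convexOn_sub_sq (y : ℝ) : ConvexOn ℝ Set.univ (fun q : ℝ => (q - y) ^ 2) := by
  simpa [Function.comp_def] using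
    even_two.convexOn_pow.comp_affineMap (AffineMap.id ℝ ℝ - AffineMap.const ℝ ℝ y)

/-- **Failure mode, existence part.** There exist positive integers
`m, dx, dθ` (with `d_y = 1`), a loss `ℓ` that is differentiable, convex and nonnegative
in its first argument for every target, a differentiable network `f`, data, `λ > 0`
and a parameter `θ` such that `θ` is a stationary point of `L` but not a global minimum
of `L`, and for every `(a, b, w)` the gradient of `θ' ↦ L̃(θ', a, b, w)` at `θ` is zero. -/
theorem failure_mode_exists :
    ∃ (m dx dθ : ℕ), 0 < m ∧ 0 < dx ∧ 0 < dθ ∧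
    ∃ (ℓ : ℝ → ℝ → ℝ)
      (f : EuclideanSpace ℝ (Fin dx) → EuclideanSpace ℝ (Fin dθ) → ℝ)
      (x : Fin m → EuclideanSpace ℝ (Fin dx)) (y : Fin m → ℝ)
      (lam : ℝ) (θ : EuclideanSpace ℝ (Fin dθ)),
      -- the loss is differentiable, convex and nonnegative in its first argument
      (∀ yv : ℝ, Differentiable ℝ (fun q => ℓ q yv) ∧
        ConvexOn ℝ Set.univ (fun q => ℓ q yv) ∧ ∀ q : ℝ, 0 ≤ ℓ q yv) ∧
      -- the network is differentiable
      Differentiable ℝ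
        (fun p : EuclideanSpace ℝ (Fin dx) × EuclideanSpace ℝ (Fin dθ) => f p.1 p.2) ∧
      0 < lam ∧
      -- θ is a stationary point of L
      gradient (fun θ' => (1 / (m : ℝ)) * ∑ i, ℓ (f (x i) θ') (y i)) θ = 0 ∧
      -- θ is not a global minimum of L
      ¬ (∀ θ' : EuclideanSpace ℝ (Fin dθ),
          (1 / (m : ℝ)) * ∑ i, ℓ (f (x i) θ) (y i) ≤
          (1 / (m : ℝ)) * ∑ i, ℓ (f (x i) θ') (y i)) ∧
      -- the gradient of θ' ↦ L̃(θ', a, b, w) at θ is zero, for every (a, b, w)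
      ∀ (a b : ℝ) (w : EuclideanSpace ℝ (Fin dx)),
        gradient (fun θ' =>
          (1 / (m : ℝ)) * ∑ i, ℓ (f (x i) θ' + a * Real.exp (⟪w, x i⟫ + b)) (y i)
            + lam * a ^ 2) θ = 0 := by
  have hcube : HasFDerivAt (fun θ : EuclideanSpace ℝ (Fin 1) => θ 0 ^ 3)
      (0 : EuclideanSpace ℝ (Fin 1) →L[ℝ] ℝ) 0 :=
    hasFDerivAt_coord_pow_zero 0 (by norm_num)
  have hloss : ∀ y q : ℝ, DifferentiableAt ℝ (fun q => (q - y) ^ 2) q := fun _ _ => by fun_prop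
  refine ⟨1, 1, 1, one_pos, one_pos, one_pos, fun q y => (q - y) ^ 2, fun _ θ => θ 0 ^ 3,
    fun _ => 0, fun _ => 1, 1, 0,
    fun y => ⟨hloss y, convexOn_sub_sq y, fun _ => sq_nonneg _⟩,
    by fun_prop, one_pos, ?stationary, ?notMin, ?shiftedStationary⟩
  case stationary =>
    exact gradient_eq_zero_of_hasFDerivAt_zero
      (hasFDerivAt_scaled_sum_comp_zero _ _ (fun _ => hcube) (fun _ => hloss _ _) _)
  case notMin =>
    push Not
    exact ⟨WithLp.toLp 2 fun _ => 1, by norm_num⟩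
  case shiftedStationary =>
    intro a b w
    exact gradient_eq_zero_of_hasFDerivAt_zero
      ((hasFDerivAt_scaled_sum_comp_zero _ _ (fun _ => hcube.add_const _)
        (fun _ => hloss _ _) _).add_const _)
end

section
/- Let λ > 0 and assume that for every i the map ℓ_{y_i} : q ↦ ℓ(q, y_i) is differentiable on ℝ^{d_y}. Fix any θ ∈ ℝ^{d_θ}, and suppose (a, b, W) is a point at which all partial derivatives of the map (a,b,W) ↦ L̃(θ,a,b,W) with respect to the coordinates of a and b vanish (in particular, any local minimum of this map). Then a = 0. -/
/-! The data term depends on the pair `(aₖ, bₖ)` only through `c = aₖ·exp bₖ`, say as `φ c`.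
Hence `∂L̃/∂aₖ = φ'(c)·exp bₖ + 2λaₖ` and `∂L̃/∂bₖ = φ'(c)·c`; multiplying the first by `aₖ` and
subtracting the second leaves `2λaₖ² = 0`. -/

open scoped RealInnerProductSpace

noncomputable section

open Function Real

theorem eq_zero_of_deriv_mul_exp_eq_zero {φ : ℝ → ℝ} {α β lam : ℝ}
    (hφ : DifferentiableAt ℝ φ (α * exp β)) (hlam : lam ≠ 0)
    (hα : deriv (fun t => φ (t * exp β) + lam * t ^ 2) α = 0)
    (hβ : deriv (fun t => φ (α * exp t)) β = 0) : α = 0 := by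
  have hα' : deriv φ (α * exp β) * exp β + lam * (2 * α) = 0 := by
    rw [← hα]
    refine (HasDerivAt.add ?_ ?_).deriv.symm
    · exact hφ.hasDerivAt.comp α (hasDerivAt_mul_const _)
    · simpa using (hasDerivAt_pow 2 α).const_mul lam
  have hβ' : deriv φ (α * exp β) * (α * exp β) = 0 := by
    rw [← hβ]
    exact (hφ.hasDerivAt.comp β ((hasDerivAt_exp β).const_mul α)).deriv.symm
  have : lam * α ^ 2 = 0 := by linear_combination (α / 2) * hα' - hβ' / 2
  simpa [hlam] using this

variable {dx dy : ℕ}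

theorem addedNeuron_eq_update_mul_exp (a b : EuclideanSpace ℝ (Fin dy))
    (W : Fin dy → EuclideanSpace ℝ (Fin dx)) (x : EuclideanSpace ℝ (Fin dx)) (k : Fin dy) :
    addedNeuron dx dy a b W x = addedNeuron dx dy (WithLp.toLp 2 (update a k (a k * exp (b k))))
      (WithLp.toLp 2 (update b k 0)) W x := by
  ext j
  rcases eq_or_ne j k with rfl | hjk
  · simp only [addedNeuron, exp_add, update_self, exp_zero, mul_one]
    ring
  · simp [addedNeuron, hjk]

theorem differentiable_addedNeuron_update (a b : EuclideanSpace ℝ (Fin dy))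
    (W : Fin dy → EuclideanSpace ℝ (Fin dx)) (x : EuclideanSpace ℝ (Fin dx)) (k : Fin dy) :
    Differentiable ℝ (fun u => addedNeuron dx dy (WithLp.toLp 2 (update a k u)) b W x) := by
  have hupdate : Differentiable ℝ (update (a : Fin dy → ℝ) k) := fun u =>
    (hasDerivAt_update _ k u).differentiableAt
  exact (EuclideanSpace.equiv (Fin dy) ℝ).symm.differentiable.comp
    (differentiable_pi.2 fun j => (differentiable_pi.1 hupdate j).mul_const _)

theorem EuclideanSpace.norm_sq_toLp_update {ι : Type*} [Fintype ι] [DecidableEq ι]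
    (a : EuclideanSpace ℝ ι) (k : ι) (t : ℝ) :
    ‖WithLp.toLp 2 (update a k t)‖ ^ 2 = t ^ 2 + (‖a‖ ^ 2 - a k ^ 2) := by
  have hsq : (fun j => update a k t j ^ 2) = update (fun j => a j ^ 2) k (t ^ 2) :=
    funext (apply_update (fun _ v => v ^ 2) a k t)
  simp only [EuclideanSpace.norm_sq_eq, Real.norm_eq_abs, sq_abs]
  rw [hsq, Finset.sum_update_of_mem (Finset.mem_univ k),
    Finset.sum_eq_add_sum_sdiff_singleton_of_mem (Finset.mem_univ k) (fun j => a j ^ 2)]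
  ring

theorem stationary_in_a_b_implies_a_eq_zero_general
    (m dx dy dθ : ℕ)
    (x : Fin m → EuclideanSpace ℝ (Fin dx))
    (y : Fin m → EuclideanSpace ℝ (Fin dy))
    (f : EuclideanSpace ℝ (Fin dx) → EuclideanSpace ℝ (Fin dθ) → EuclideanSpace ℝ (Fin dy))
    (ℓ : EuclideanSpace ℝ (Fin dy) → EuclideanSpace ℝ (Fin dy) → ℝ)
    (hdiff : ∀ i : Fin m, Differentiable ℝ (fun q => ℓ q (y i)))
    (lam : ℝ) (hlam : 0 < lam)
    (Lt : EuclideanSpace ℝ (Fin dθ) → EuclideanSpace ℝ (Fin dy) → EuclideanSpace ℝ (Fin dy) →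
      (Fin dy → EuclideanSpace ℝ (Fin dx)) → ℝ)
    (hLt : ∀ θ a b W, Lt θ a b W =
      (1 / (m : ℝ)) * ∑ i, ℓ (f (x i) θ + addedNeuron dx dy a b W (x i)) (y i)
        + lam * ‖a‖ ^ 2)
    (θ : EuclideanSpace ℝ (Fin dθ)) (a b : EuclideanSpace ℝ (Fin dy))
    (W : Fin dy → EuclideanSpace ℝ (Fin dx))
    -- all partial derivatives with respect to the coordinates of `a` vanish
    (hpa : ∀ k : Fin dy,
      deriv (fun t : ℝ => Lt θ (WithLp.toLp 2 (Function.update a k t)) b W) (a k) = 0)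
    -- all partial derivatives with respect to the coordinates of `b` vanish
    (hpb : ∀ k : Fin dy,
      deriv (fun t : ℝ => Lt θ a (WithLp.toLp 2 (Function.update b k t)) W) (b k) = 0) :
    a = 0 := by
  ext k
  rw [PiLp.zero_apply]
  set φ : ℝ → ℝ := fun u => (1 / (m : ℝ)) * ∑ i, ℓ (f (x i) θ +
    addedNeuron dx dy (WithLp.toLp 2 (update a k u)) (WithLp.toLp 2 (update b k 0)) W (x i)) (y i)
  have hφ : Differentiable ℝ φ :=
    (Differentiable.fun_sum fun i _ => (hdiff i).comp
      ((differentiable_addedNeuron_update _ _ W (x i) k).const_add _)).const_mul _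
  have hA : ∀ t, Lt θ (WithLp.toLp 2 (update a k t)) b W =
      φ (t * exp (b k)) + lam * t ^ 2 + lam * (‖a‖ ^ 2 - a k ^ 2) := by
    intro t
    simp only [hLt, EuclideanSpace.norm_sq_toLp_update, φ]
    simp_rw [addedNeuron_eq_update_mul_exp _ b W _ k]
    simp only [update_self, update_idem]
    ring
  have hB : ∀ t, Lt θ a (WithLp.toLp 2 (update b k t)) W = φ (a k * exp t) + lam * ‖a‖ ^ 2 := by
    intro t
    simp only [hLt, φ]
    simp_rw [addedNeuron_eq_update_mul_exp a _ W _ k]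
    simp only [update_self, update_idem]
  refine eq_zero_of_deriv_mul_exp_eq_zero (β := b k) (hφ _) hlam.ne' ?_ ?_
  · simpa only [hA, deriv_add_const] using hpa k
  · simpa only [hB, deriv_add_const] using hpb k

/-- Let `λ > 0` and each `ℓ_{y_i}` be differentiable. If all partial
derivatives of `(a,b,W) ↦ L̃(θ,a,b,W)` with respect to the coordinates of `a` and of `b`
vanish at `(a, b, W)` (as at any local minimum), then `a = 0`. -/
theorem stationary_in_a_b_implies_a_eq_zero
    (m dx dy dθ : ℕ) (hm : 0 < m) (hdx : 0 < dx) (hdy : 0 < dy) (hdθ : 0 < dθ)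
    (x : Fin m → EuclideanSpace ℝ (Fin dx))
    (y : Fin m → EuclideanSpace ℝ (Fin dy))
    (f : EuclideanSpace ℝ (Fin dx) → EuclideanSpace ℝ (Fin dθ) → EuclideanSpace ℝ (Fin dy))
    (ℓ : EuclideanSpace ℝ (Fin dy) → EuclideanSpace ℝ (Fin dy) → ℝ)
    (hdiff : ∀ i : Fin m, Differentiable ℝ (fun q => ℓ q (y i)))
    (lam : ℝ) (hlam : 0 < lam)
    (Lt : EuclideanSpace ℝ (Fin dθ) → EuclideanSpace ℝ (Fin dy) → EuclideanSpace ℝ (Fin dy) →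
      (Fin dy → EuclideanSpace ℝ (Fin dx)) → ℝ)
    (hLt : ∀ θ a b W, Lt θ a b W =
      (1 / (m : ℝ)) * ∑ i, ℓ (f (x i) θ + addedNeuron dx dy a b W (x i)) (y i)
        + lam * ‖a‖ ^ 2)
    (θ : EuclideanSpace ℝ (Fin dθ)) (a b : EuclideanSpace ℝ (Fin dy))
    (W : Fin dy → EuclideanSpace ℝ (Fin dx))
    -- all partial derivatives with respect to the coordinates of `a` vanish
    (hpa : ∀ k : Fin dy,
      deriv (fun t : ℝ => Lt θ (WithLp.toLp 2 (Function.update a k t)) b W) (a k) = 0)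
    -- all partial derivatives with respect to the coordinates of `b` vanish
    (hpb : ∀ k : Fin dy,
      deriv (fun t : ℝ => Lt θ a (WithLp.toLp 2 (Function.update b k t)) W) (b k) = 0) :
    a = 0 :=
  stationary_in_a_b_implies_a_eq_zero_general m dx dy dθ x y f ℓ hdiff lam hlam Lt hLt θ a b W hpa
    hpb
end
end

section
/- Let x̄_1,…,x̄_n be pairwise distinct points in ℝ^{d} and let q_1,…,q_n be arbitrary real numbers. Then there exists a polynomial function P : ℝ^{d} → ℝ (a real multivariate polynomial in d variables) of total degree at most n − 1 such that P(x̄_j) = q_j for all j ∈ {1,…,n}. -/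
/-!
Lagrange interpolation in several variables. Two distinct points differ in some coordinate `k`,
so an affine function of `X k` vanishes at one and takes the value `1` at the other. For each
node `j`, the product of these separating functions over the other `n - 1` nodes has degree at
most `n - 1` and is the indicator of `j` on the nodes; the interpolant is the combination of
these indicators weighted by the prescribed values.
-/

open MvPolynomial

namespace MvPolynomial

variable {σ K : Type*} [Field K]

theorem exists_totalDegree_le_one_eval_eq_one_eval_eq_zero {a b : σ → K} (hab : a ≠ b) :
    ∃ p : MvPolynomial σ K, p.totalDegree ≤ 1 ∧ eval a p = 1 ∧ eval b p = 0 := by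
  obtain ⟨k, hk⟩ := Function.ne_iff.mp hab
  refine ⟨(a k - b k)⁻¹ • (X k - C (b k)), ?_, ?_, ?_⟩
  · calc ((a k - b k)⁻¹ • (X k - C (b k))).totalDegree
        ≤ (X k - C (b k) : MvPolynomial σ K).totalDegree := totalDegree_smul_le _ _
      _ ≤ (X k : MvPolynomial σ K).totalDegree := totalDegree_sub_C_le _ _
      _ = 1 := totalDegree_X k
  · simp [inv_mul_cancel₀ (sub_ne_zero.mpr hk)]
  · simp

variable {ι : Type*} [Fintype ι] [DecidableEq ι]

theorem exists_totalDegree_le_eval_eq_ite {x : ι → σ → K} (hx : Function.Injective x) (j : ι) :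
    ∃ p : MvPolynomial σ K, p.totalDegree ≤ Fintype.card ι - 1 ∧
      ∀ i, eval (x i) p = if i = j then 1 else 0 := by
  have separate : ∀ i, i ≠ j →
      ∃ p : MvPolynomial σ K, p.totalDegree ≤ 1 ∧ eval (x j) p = 1 ∧ eval (x i) p = 0 :=
    fun i hij => exists_totalDegree_le_one_eval_eq_one_eval_eq_zero (hx.ne hij.symm)
  choose! p hp_deg hp_one hp_zero using separate
  refine ⟨∏ i ∈ Finset.univ.erase j, p i, ?_, fun i => ?_⟩
  · calc (∏ i ∈ Finset.univ.erase j, p i).totalDegree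
        ≤ ∑ i ∈ Finset.univ.erase j, (p i).totalDegree := totalDegree_finsetProd _ _
      _ ≤ ∑ _i ∈ Finset.univ.erase j, 1 :=
          Finset.sum_le_sum fun i hi => hp_deg i (Finset.ne_of_mem_erase hi)
      _ = Fintype.card ι - 1 := by simp [Finset.card_erase_of_mem]
  · rw [map_prod]
    split_ifs with hij
    · subst hij
      exact Finset.prod_eq_one fun i' hi' => hp_one i' (Finset.ne_of_mem_erase hi')
    · exact Finset.prod_eq_zero (Finset.mem_erase.mpr ⟨hij, Finset.mem_univ i⟩) (hp_zero i hij)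

theorem exists_totalDegree_le_eval_eq {x : ι → σ → K} (hx : Function.Injective x) (q : ι → K) :
    ∃ P : MvPolynomial σ K, P.totalDegree ≤ Fintype.card ι - 1 ∧ ∀ j, eval (x j) P = q j := by
  choose L hL_deg hL_eval using exists_totalDegree_le_eval_eq_ite hx
  refine ⟨∑ j, q j • L j, ?_, fun i => ?_⟩
  · exact (totalDegree_finsetSum _ _).trans
      (Finset.sup_le fun j _ => (totalDegree_smul_le _ _).trans (hL_deg j))
  · simp [hL_eval]

end MvPolynomial

/-- Given pairwise distinct points `x̄₁, …, x̄ₙ ∈ ℝ^d` and arbitrary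
values `q₁, …, qₙ ∈ ℝ`, there exists a real multivariate polynomial `P` in `d` variables
of total degree at most `n − 1` interpolating the data: `P(x̄ⱼ) = qⱼ` for all `j`. -/
theorem multivariate_polynomial_interpolation
    (n d : ℕ) (xbar : Fin n → EuclideanSpace ℝ (Fin d))
    (hx : Function.Injective xbar) (q : Fin n → ℝ) :
    ∃ P : MvPolynomial (Fin d) ℝ, P.totalDegree ≤ n - 1 ∧
      ∀ j : Fin n, MvPolynomial.eval (fun k => xbar j k) P = q j := by
  simpa using exists_totalDegree_le_eval_eq ((WithLp.ofLp_injective 2).comp hx) q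
end

section
/- Let x̄_1,…,x̄_n be pairwise distinct points in ℝ^{d}. Then there exist vectors w_1,…,w_n ∈ ℝ^{d} such that the n × n matrix M with entries M_{j,t} = exp(⟨w_t, x̄_j⟩) is invertible (equivalently, has rank n). -/
open scoped RealInnerProductSpace

/-!
Pick `v` with the numbers `⟪v, x̄ⱼ⟫` pairwise distinct and put `w_t = t • v`. Then
`exp ⟪w_t, x̄ⱼ⟫ = (exp ⟪v, x̄ⱼ⟫) ^ t`, so the matrix is the Vandermonde matrix of the distinct
numbers `exp ⟪v, x̄ⱼ⟫`.
-/

/-- The differences `x i - x j` are finitely many nonzero vectors, and a real vector space is not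
a finite union of the proper hyperplanes `{v | ⟪x i - x j, v⟫ = 0}`. -/
theorem exists_inner_injective {ι E : Type*} [Finite ι] [NormedAddCommGroup E]
    [InnerProductSpace ℝ E] {x : ι → E} (hx : Function.Injective x) :
    ∃ v : E, Function.Injective fun i => ⟪v, x i⟫ := by
  let pairs := {p : ι × ι // p.1 ≠ p.2}
  obtain ⟨v, hv⟩ := Module.Dual.exists_forall_ne_zero_of_forall_exists
    (fun p : pairs => innerₛₗ ℝ (x p.1.1 - x p.1.2)) fun p =>
      ⟨x p.1.1 - x p.1.2, inner_self_ne_zero.mpr (sub_ne_zero.mpr (hx.ne p.2))⟩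
  refine ⟨v, fun i j hij => by_contra fun hne => hv ⟨(i, j), hne⟩ ?_⟩
  rw [innerₛₗ_apply_apply, inner_sub_left, sub_eq_zero, real_inner_comm v, real_inner_comm v]
  exact hij

theorem exp_inner_smul_matrix_eq_vandermonde {n : ℕ} {E : Type*} [NormedAddCommGroup E]
    [InnerProductSpace ℝ E] (v : E) (x : Fin n → E) :
    (Matrix.of fun j t : Fin n => Real.exp ⟪((t : ℕ) : ℝ) • v, x j⟫) =
      Matrix.vandermonde fun j => Real.exp ⟪v, x j⟫ := by
  ext j t
  rw [Matrix.of_apply, Matrix.vandermonde_apply, real_inner_smul_left, Real.exp_nat_mul]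

/-- Given pairwise distinct points `x̄₁, …, x̄ₙ ∈ ℝ^d`, there exist
vectors `w₁, …, wₙ ∈ ℝ^d` such that the `n × n` matrix with entries
`M_{j,t} = exp(⟨w_t, x̄_j⟩)` is invertible. -/
theorem exp_matrix_invertible
    (n d : ℕ) (xbar : Fin n → EuclideanSpace ℝ (Fin d))
    (hx : Function.Injective xbar) :
    ∃ w : Fin n → EuclideanSpace ℝ (Fin d),
      IsUnit (Matrix.of fun j t : Fin n => Real.exp (⟪w t, xbar j⟫)) := by
  obtain ⟨v, hv⟩ := exists_inner_injective hx
  refine ⟨fun t => ((t : ℕ) : ℝ) • v, ?_⟩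
  rw [exp_inner_smul_matrix_eq_vandermonde, Matrix.isUnit_iff_isUnit_det, isUnit_iff_ne_zero,
    Matrix.det_vandermonde_ne_zero_iff]
  exact Real.exp_injective.comp hv
end

section
/- (Example 1.) Fix λ > 0, d ≥ 1, and x₁ ∈ ℝ^{d}, and define F : ℝ × ℝ × ℝ^{d} → ℝ by F(a, b, w) = (1 + a·exp(⟨w, x₁⟩ + b))² + λ·a². Then: (i) F(a,b,w) > 0 for all (a,b,w); (ii) the infimum of F over ℝ × ℝ × ℝ^{d} equals 0 (e.g., F(−exp(−1/ε), 1/ε − ⟨w, x₁⟩, w) = λ·exp(−2/ε) → 0 as ε → 0⁺); and (iii) F has no local minimum point. -/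
open scoped RealInnerProductSpace

noncomputable section

/-!
`F (a, b, w)` depends on `(b, w)` only through `s = ⟪w, x₁⟫ + b`, so everything reduces to the
two-variable function `G (a, s) = (r + a eˢ)² + λa²` (here `r = 1`). It is positive because both
squares cannot vanish at once, and `G (-r e⁻ᵗ, t) = λ r² e⁻²ᵗ → 0`. At a critical point
`∂ₛG = 2 (r + a eˢ) a eˢ = 0` forces `a = 0` or `r + a eˢ = 0`, and in either case
`∂ₐG = 2 (r + a eˢ) eˢ + 2λa` cannot vanish.
-/

open Real Filter

def expNeuronLoss (r lam : ℝ) (p : ℝ × ℝ) : ℝ :=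
  (r + p.1 * exp p.2) ^ 2 + lam * p.1 ^ 2

section expNeuronLoss

variable {r lam : ℝ}

theorem expNeuronLoss_pos (hr : r ≠ 0) (hlam : 0 < lam) (p : ℝ × ℝ) :
    0 < expNeuronLoss r lam p := by
  obtain ⟨a, s⟩ := p
  rcases eq_or_ne a 0 with rfl | ha
  · simp only [expNeuronLoss, zero_mul, add_zero]
    positivity
  · unfold expNeuronLoss
    positivity

theorem expNeuronLoss_neg_mul_exp_neg (r lam t : ℝ) :
    expNeuronLoss r lam (-r * exp (-t), t) = lam * r ^ 2 * exp (-t) ^ 2 := by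
  have hexp : exp (-t) * exp t = 1 := by rw [← exp_add, neg_add_cancel, exp_zero]
  simp only [expNeuronLoss]
  linear_combination r ^ 2 * (exp (-t) * exp t - 1) * hexp

theorem isGLB_range_expNeuronLoss (hlam : 0 ≤ lam) :
    IsGLB (Set.range (expNeuronLoss r lam)) 0 := by
  refine ⟨?_, fun c hc => ?_⟩
  · rintro _ ⟨p, rfl⟩
    unfold expNeuronLoss
    positivity
  · have hlim : Tendsto (fun t => lam * r ^ 2 * exp (-t) ^ 2) atTop (nhds 0) := by
      simpa using (tendsto_exp_neg_atTop_nhds_zero.pow 2).const_mul (lam * r ^ 2)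
    refine ge_of_tendsto hlim (Eventually.of_forall fun t => ?_)
    rw [← expNeuronLoss_neg_mul_exp_neg]
    exact hc ⟨_, rfl⟩

theorem hasDerivAt_expNeuronLoss_fst (a s : ℝ) :
    HasDerivAt (fun a => expNeuronLoss r lam (a, s))
      (2 * (r + a * exp s) * exp s + 2 * lam * a) a := by
  have := ((((hasDerivAt_id' a).mul_const (exp s)).const_add r).fun_pow 2).fun_add
    ((hasDerivAt_pow 2 a).const_mul lam)
  exact this.congr_deriv (by ring)

theorem hasDerivAt_expNeuronLoss_snd (a s : ℝ) :
    HasDerivAt (fun s => expNeuronLoss r lam (a, s)) (2 * (r + a * exp s) * (a * exp s)) s := by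
  have := ((((hasDerivAt_exp s).const_mul a).const_add r).fun_pow 2).add_const (lam * a ^ 2)
  exact this.congr_deriv (by ring)

theorem not_isLocalMin_expNeuronLoss (hr : r ≠ 0) (hlam : lam ≠ 0) (p : ℝ × ℝ) :
    ¬ IsLocalMin (expNeuronLoss r lam) p := by
  obtain ⟨a, s⟩ := p
  intro hmin
  have hda : 2 * (r + a * exp s) * exp s + 2 * lam * a = 0 :=
    (hmin.comp_continuous (g := (·, s)) (by fun_prop)).hasDerivAt_eq_zero
      (hasDerivAt_expNeuronLoss_fst a s)
  have hds : 2 * (r + a * exp s) * (a * exp s) = 0 :=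
    (hmin.comp_continuous (g := (a, ·)) (by fun_prop)).hasDerivAt_eq_zero
      (hasDerivAt_expNeuronLoss_snd a s)
  have hE : exp s ≠ 0 := (exp_pos s).ne'
  rcases mul_eq_zero.mp hds with hres | haE
  · have hres₀ : r + a * exp s = 0 := by simpa using hres
    have ha : a = 0 := by simpa [hres₀, hlam] using hda
    simp [ha, hr] at hres₀
  · have ha : a = 0 := by simpa [hE] using haE
    simp [ha, hr, hE] at hda

end expNeuronLoss

section InnerAdd

variable {E : Type*} [NormedAddCommGroup E] [InnerProductSpace ℝ E] {x : E}
  {F : ℝ × ℝ × E → ℝ} {G : ℝ × ℝ → ℝ}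

theorem range_eq_range_of_eq_inner_add (hF : ∀ a b w, F (a, b, w) = G (a, ⟪w, x⟫ + b)) :
    Set.range F = Set.range G := by
  ext y
  constructor
  · rintro ⟨⟨a, b, w⟩, rfl⟩
    exact ⟨_, (hF a b w).symm⟩
  · rintro ⟨⟨a, s⟩, rfl⟩
    exact ⟨(a, s, 0), by simp [hF]⟩

theorem isLocalMin_of_eq_inner_add (hF : ∀ a b w, F (a, b, w) = G (a, ⟪w, x⟫ + b))
    {a b : ℝ} {w : E} (hmin : IsLocalMin F (a, b, w)) : IsLocalMin G (a, ⟪w, x⟫ + b) := by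
  have hcomp :
      IsLocalMin (F ∘ fun p : ℝ × ℝ => (p.1, p.2 - ⟪w, x⟫, w)) (a, ⟪w, x⟫ + b) :=
    IsLocalMin.comp_continuous (by simpa using hmin) (by fun_prop)
  convert hcomp using 1
  ext p
  simp [hF]

end InnerAdd

theorem example_one_general
    (lam : ℝ) (hlam : 0 < lam) (d : ℕ)
    (x₁ : EuclideanSpace ℝ (Fin d))
    (F : ℝ × ℝ × EuclideanSpace ℝ (Fin d) → ℝ)
    (hF : ∀ (a b : ℝ) (w : EuclideanSpace ℝ (Fin d)),
      F (a, b, w) = (1 + a * Real.exp (⟪w, x₁⟫ + b)) ^ 2 + lam * a ^ 2) :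
    (∀ p : ℝ × ℝ × EuclideanSpace ℝ (Fin d), 0 < F p) ∧
    IsGLB (Set.range F) 0 ∧
    ∀ p : ℝ × ℝ × EuclideanSpace ℝ (Fin d), ¬ IsLocalMin F p := by
  have hG : ∀ a b w, F (a, b, w) = expNeuronLoss 1 lam (a, ⟪w, x₁⟫ + b) := hF
  refine ⟨fun ⟨a, b, w⟩ => ?_, ?_, fun ⟨a, b, w⟩ hmin => ?_⟩
  · rw [hG]
    exact expNeuronLoss_pos one_ne_zero hlam _
  · rw [range_eq_range_of_eq_inner_add hG]
    exact isGLB_range_expNeuronLoss hlam.le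
  · exact not_isLocalMin_expNeuronLoss one_ne_zero hlam.ne' _
      (isLocalMin_of_eq_inner_add hG hmin)

/-- **Example 1.** For `λ > 0`, `d ≥ 1`, `x₁ ∈ ℝ^d` and
`F(a,b,w) = (1 + a·exp(⟨w,x₁⟩ + b))² + λa²`: (i) `F > 0` everywhere; (ii) the infimum
of `F` over `ℝ × ℝ × ℝ^d` equals `0`; (iii) `F` has no local minimum point. -/
theorem example_one
    (lam : ℝ) (hlam : 0 < lam) (d : ℕ) (hd : 1 ≤ d)
    (x₁ : EuclideanSpace ℝ (Fin d))
    (F : ℝ × ℝ × EuclideanSpace ℝ (Fin d) → ℝ)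
    (hF : ∀ (a b : ℝ) (w : EuclideanSpace ℝ (Fin d)),
      F (a, b, w) = (1 + a * Real.exp (⟪w, x₁⟫ + b)) ^ 2 + lam * a ^ 2) :
    (∀ p : ℝ × ℝ × EuclideanSpace ℝ (Fin d), 0 < F p) ∧
    IsGLB (Set.range F) 0 ∧
    ∀ p : ℝ × ℝ × EuclideanSpace ℝ (Fin d), ¬ IsLocalMin F p :=
  example_one_general lam hlam d x₁ F hF
end
end

section
/- (Example 3.) Fix λ > 0, d ≥ 1, and distinct points x₁ ≠ x₂ in ℝ^{d}, and define F : ℝ × ℝ × ℝ^{d} → ℝ by F(a, b, w) = (a·exp(⟨w, x₁⟩ + b) − 1)² + (a·exp(⟨w, x₂⟩ + b) + 1)² + λ·a². Then: (i) F has no local minimum point; and (ii) the infimum of F over ℝ × ℝ × ℝ^{d} is at most 1 (in contrast, F(0, b, w) = 2 for all b, w), since with a = exp(−1/ε), w = −(x₂ − x₁)/ε, b = 1/ε − ⟨w, x₁⟩ one has F(a,b,w) = (exp(−‖x₂ − x₁‖₂²/ε) + 1)² + λ·exp(−2/ε) → 1 as ε → 0⁺. -/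
open scoped RealInnerProductSpace

noncomputable section

private lemma aux_lt (u v U V lam a : ℝ)
    (hD0 : 0 < u - v) (ha : 0 < a) (h2 : a * (u ^ 2 + v ^ 2 + lam) ≤ u - v) :
    (a * u - 1) ^ 2 + (a * v + 1) ^ 2 + lam * a ^ 2 < (0 * U - 1 : ℝ) ^ 2 + (0 * V + 1) ^ 2 + lam * 0 ^ 2 := by
  have h3 : a * (a * (u ^ 2 + v ^ 2 + lam)) ≤ a * (u - v) := by
    exact mul_le_mul_of_nonneg_left h2 ha.le
  nlinarith [mul_pos ha hD0]

set_option maxHeartbeats 1600000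

/-- **Example 3.** For `λ > 0`, `d ≥ 1`, distinct `x₁ ≠ x₂` in `ℝ^d` and
`F(a,b,w) = (a·exp(⟨w,x₁⟩+b) − 1)² + (a·exp(⟨w,x₂⟩+b) + 1)² + λa²`:
(i) `F` has no local minimum point; and (ii) the infimum of `F` is at most `1`,
whereas `F(0, b, w) = 2` for all `b, w`. -/
theorem example_three
    (lam : ℝ) (hlam : 0 < lam) (d : ℕ) (hd : 1 ≤ d)
    (x₁ x₂ : EuclideanSpace ℝ (Fin d)) (hx : x₁ ≠ x₂)
    (F : ℝ × ℝ × EuclideanSpace ℝ (Fin d) → ℝ)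
    (hF : ∀ (a b : ℝ) (w : EuclideanSpace ℝ (Fin d)),
      F (a, b, w) = (a * Real.exp (⟪w, x₁⟫ + b) - 1) ^ 2
        + (a * Real.exp (⟪w, x₂⟫ + b) + 1) ^ 2 + lam * a ^ 2) :
    (∀ p : ℝ × ℝ × EuclideanSpace ℝ (Fin d), ¬ IsLocalMin F p) ∧
    sInf (Set.range F) ≤ 1 ∧
    ∀ (b : ℝ) (w : EuclideanSpace ℝ (Fin d)), F (0, b, w) = 2 := by
  have hΔ : x₂ - x₁ ≠ 0 := sub_ne_zero.mpr (Ne.symm hx)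
  set Δ : EuclideanSpace ℝ (Fin d) := x₂ - x₁ with hΔdef
  have hc : 0 < ⟪Δ, Δ⟫ := by
    rw [real_inner_self_eq_norm_sq]
    exact pow_pos (norm_pos_iff.mpr hΔ) 2
  set c : ℝ := ⟪Δ, Δ⟫ with hcdef
  refine ⟨?_, ?_, ?_⟩
  · -- no local min
    rintro ⟨a, b, w⟩ hmin
    set U := Real.exp (⟪w, x₁⟫ + b) with hU
    set V := Real.exp (⟪w, x₂⟫ + b) with hV
    have hU0 : 0 < U := Real.exp_pos _
    have hV0 : 0 < V := Real.exp_pos _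
    -- local min along a
    have hmina : IsLocalMin (fun t : ℝ => F (t, b, w)) a := by
      have hg : Continuous (fun t : ℝ => ((t, b, w) : ℝ × ℝ × EuclideanSpace ℝ (Fin d))) := by
        fun_prop
      exact IsMinFilter.comp_tendsto (g := fun t : ℝ => ((t, b, w) : ℝ × ℝ × EuclideanSpace ℝ (Fin d))) hmin (hg.tendsto a)
    have hminb : IsLocalMin (fun t : ℝ => F (a, t, w)) b := by
      have hg : Continuous (fun t : ℝ => ((a, t, w) : ℝ × ℝ × EuclideanSpace ℝ (Fin d))) := by
        fun_prop
      exact IsMinFilter.comp_tendsto (g := fun t : ℝ => ((a, t, w) : ℝ × ℝ × EuclideanSpace ℝ (Fin d))) hmin (hg.tendsto b)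
    -- derivative along a
    have hPa : HasDerivAt (fun t : ℝ => F (t, b, w))
        (2 * (a * U - 1) ^ 1 * (1 * U) + 2 * (a * V + 1) ^ 1 * (1 * V) + lam * (2 * a ^ 1 * 1)) a := by
      have : HasDerivAt (fun t : ℝ => (t * U - 1) ^ 2 + (t * V + 1) ^ 2 + lam * t ^ 2)
          (2 * (a * U - 1) ^ 1 * (1 * U) + 2 * (a * V + 1) ^ 1 * (1 * V) + lam * (2 * a ^ 1 * 1)) a := by
        exact ((((hasDerivAt_id a).mul_const U).sub_const 1).pow 2).add
            ((((hasDerivAt_id a).mul_const V).add_const 1).pow 2) |>.add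
            (((hasDerivAt_id a).pow 2).const_mul lam)
      exact this.congr_of_eventuallyEq (by filter_upwards with t; rw [hF])
    have E1 : 2 * (a * U - 1) * U + 2 * (a * V + 1) * V + 2 * lam * a = 0 := by
      have := hmina.deriv_eq_zero
      rw [hPa.deriv] at this
      nlinarith [this]
    -- derivative along b
    have hPb : HasDerivAt (fun t : ℝ => F (a, t, w))
        (2 * (a * U - 1) ^ 1 * (a * (U * 1)) + 2 * (a * V + 1) ^ 1 * (a * (V * 1))) b := by
      have h1 : HasDerivAt (fun t : ℝ => Real.exp (⟪w, x₁⟫ + t)) (U * 1) b :=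
        ((hasDerivAt_id b).const_add _).exp
      have h2 : HasDerivAt (fun t : ℝ => Real.exp (⟪w, x₂⟫ + t)) (V * 1) b :=
        ((hasDerivAt_id b).const_add _).exp
      have : HasDerivAt (fun t : ℝ =>
          (a * Real.exp (⟪w, x₁⟫ + t) - 1) ^ 2 + (a * Real.exp (⟪w, x₂⟫ + t) + 1) ^ 2 + lam * a ^ 2)
          (2 * (a * U - 1) ^ 1 * (a * (U * 1)) + 2 * (a * V + 1) ^ 1 * (a * (V * 1)) + 0) b := by
        exact (((h1.const_mul a).sub_const 1).pow 2).add
            (((h2.const_mul a).add_const 1).pow 2) |>.add (hasDerivAt_const b _)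
      simpa using this.congr_of_eventuallyEq (by filter_upwards with t; rw [hF])
    have E2 : 2 * (a * U - 1) * (a * U) + 2 * (a * V + 1) * (a * V) = 0 := by
      have := hminb.deriv_eq_zero
      rw [hPb.deriv] at this
      nlinarith [this]
    have hsq : 2 * lam * a ^ 2 = 0 := by linear_combination a * E1 - E2
    have ha : a = 0 := by
      have h2 : a ^ 2 = 0 := by
        have h3 : lam ≠ 0 := hlam.ne'
        nlinarith [sq_nonneg a]
      exact pow_eq_zero_iff two_ne_zero |>.mp h2
    subst ha
    have hUV : U = V := by linarith [E1]
    have hwx : ⟪w, x₁⟫ = ⟪w, x₂⟫ := by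
      have h4 : (⟪w, x₁⟫ + b : ℝ) = ⟪w, x₂⟫ + b := Real.exp_injective (hU.symm ▸ hV.symm ▸ hUV)
      linarith
    obtain ⟨ε, hε, hball⟩ := Metric.eventually_nhds_iff.mp hmin
    set s : ℝ := ε / (2 * (‖Δ‖ + 1)) with hs
    have hΔn : 0 < ‖Δ‖ := norm_pos_iff.mpr hΔ
    have hs0 : 0 < s := by positivity
    set w' : EuclideanSpace ℝ (Fin d) := w - s • Δ with hw'
    have hinner1 : ⟪w', x₁⟫ = ⟪w, x₁⟫ - s * ⟪Δ, x₁⟫ := by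
      rw [hw', inner_sub_left, real_inner_smul_left]
    have hinner2 : ⟪w', x₂⟫ = ⟪w, x₁⟫ - s * ⟪Δ, x₁⟫ - s * c := by
      rw [hw', inner_sub_left, real_inner_smul_left, ← hwx]
      have : ⟪Δ, x₂⟫ = ⟪Δ, x₁⟫ + c := by
        rw [hcdef, hΔdef, inner_sub_right]; ring
      rw [this]; ring
    set u' := Real.exp (⟪w', x₁⟫ + b) with hu'
    set v' := Real.exp (⟪w', x₂⟫ + b) with hv'
    have hu'0 : 0 < u' := Real.exp_pos _
    have hv'0 : 0 < v' := Real.exp_pos _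
    have hD : 0 < u' - v' := by
      have : ⟪w', x₂⟫ + b < ⟪w', x₁⟫ + b := by
        rw [hinner1, hinner2]; nlinarith
      simpa [hu', hv'] using sub_pos.mpr (Real.exp_lt_exp.mpr this)
    set D := u' - v' with hDdef
    set M := u' ^ 2 + v' ^ 2 + lam with hM
    have hM0 : 0 < M := by positivity
    set a' : ℝ := min (ε / 2) (D / M) with ha'
    have ha'0 : 0 < a' := lt_min (by positivity) (by positivity)
    have hlt : F (a', b, w') < F (0, b, w) := by
      rw [hF, hF]
      have h1 : a' ≤ D / M := min_le_right _ _
      have h2 : a' * M ≤ D := (le_div_iff₀ hM0).mp h1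
      rw [hM] at h2
      rw [hDdef] at hD h2
      exact aux_lt u' v' U V lam a' hD ha'0 h2
    have hdist : dist ((a', b, w') : ℝ × ℝ × EuclideanSpace ℝ (Fin d)) (0, b, w) < ε := by
      rw [Prod.dist_eq, Prod.dist_eq]
      have hda : dist a' 0 < ε := by
        rw [Real.dist_eq, sub_zero, abs_of_pos ha'0]
        calc a' ≤ ε / 2 := min_le_left _ _
        _ < ε := by linarith
      have hdw : dist w' w < ε := by
        rw [dist_eq_norm, hw']
        have : w - s • Δ - w = -(s • Δ) := by abel
        rw [this, norm_neg, norm_smul, Real.norm_eq_abs, abs_of_pos hs0]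
        calc s * ‖Δ‖ = ε * (‖Δ‖ / (2 * (‖Δ‖ + 1))) := by rw [hs]; ring
        _ < ε * 1 := by
            apply mul_lt_mul_of_pos_left _ hε
            rw [div_lt_one (by positivity)]; nlinarith
        _ = ε := mul_one ε
      exact max_lt hda (max_lt (by simpa using hε) hdw)
    exact absurd (hball hdist) (not_le.mpr hlt)
  · -- infimum
    have hbdd : BddBelow (Set.range F) := by
      refine ⟨0, ?_⟩
      rintro y ⟨⟨a, b, w⟩, rfl⟩
      rw [hF]; positivity
    refine le_of_forall_pos_le_add ?_
    intro ε hε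
    set δ : ℝ := min 1 (ε / 6) with hδ
    have hδ0 : 0 < δ := lt_min one_pos (by positivity)
    set t : ℝ := max 0 (-(Real.log (ε / (2 * lam)) / 2)) with ht
    have hexp_t : lam * Real.exp (-(2 * t)) ≤ ε / 2 := by
      have h1 : -(2 * t) ≤ Real.log (ε / (2 * lam)) := by
        have : Real.log (ε / (2 * lam)) / 2 ≥ -t := by
          have := le_max_right 0 (-(Real.log (ε / (2 * lam)) / 2))
          linarith
        linarith
      have h2 : Real.exp (-(2 * t)) ≤ ε / (2 * lam) := by
        calc Real.exp (-(2 * t)) ≤ Real.exp (Real.log (ε / (2 * lam))) := Real.exp_le_exp.mpr h1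
        _ = ε / (2 * lam) := Real.exp_log (by positivity)
      calc lam * Real.exp (-(2 * t)) ≤ lam * (ε / (2 * lam)) :=
            mul_le_mul_of_nonneg_left h2 hlam.le
      _ = ε / 2 := by field_simp
    set s : ℝ := max 0 (-Real.log δ / c) with hss
    have hexp_s : Real.exp (-(s * c)) ≤ δ := by
      have h1 : -(s * c) ≤ Real.log δ := by
        have h2 : s ≥ -Real.log δ / c := le_max_right _ _
        have := mul_le_mul_of_nonneg_right h2 hc.le
        rw [div_mul_cancel₀] at this
        · linarith
        · exact hc.ne'
      calc Real.exp (-(s * c)) ≤ Real.exp (Real.log δ) := Real.exp_le_exp.mpr h1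
      _ = δ := Real.exp_log hδ0
    set w : EuclideanSpace ℝ (Fin d) := (-s) • Δ with hw
    set b : ℝ := t - ⟪w, x₁⟫ with hb
    set a : ℝ := Real.exp (-t) with ha
    have key : F (a, b, w) ≤ 1 + ε := by
      have hi1 : ⟪w, x₁⟫ + b = t := by rw [hb]; ring
      have hi2 : ⟪w, x₂⟫ + b = t - s * c := by
        rw [hb]
        have : ⟪w, x₂⟫ - ⟪w, x₁⟫ = -s * c := by
          rw [hw, real_inner_smul_left, real_inner_smul_left, hcdef, hΔdef, inner_sub_right]
          ring
        linarith
      rw [hF, hi1, hi2, ha]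
      have e1 : Real.exp (-t) * Real.exp t = 1 := by
        rw [← Real.exp_add]; simp
      have e2 : Real.exp (-t) * Real.exp (t - s * c) = Real.exp (-(s * c)) := by
        rw [← Real.exp_add]; ring_nf
      have e3 : Real.exp (-t) ^ 2 = Real.exp (-(2 * t)) := by
        rw [← Real.exp_nat_mul]; ring_nf
      rw [e1, e2, e3]
      have h4 : 0 ≤ Real.exp (-(s * c)) := (Real.exp_pos _).le
      have h5 : δ ≤ 1 := min_le_left _ _
      have h6 : δ ≤ ε / 6 := min_le_right _ _
      nlinarith [hexp_s, hexp_t]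
    calc sInf (Set.range F) ≤ F (a, b, w) := csInf_le hbdd (Set.mem_range_self _)
    _ ≤ 1 + ε := key
  · intro b w
    rw [hF]; ring
end
end

section
/- (Example 2.) Fix λ > 0, d ≥ 1, and x₁ ∈ ℝ^{d}, and define F : ℝ × ℝ × ℝ^{d} → ℝ by F(a, b, w) = (max(0, 2 − a·exp(⟨w, x₁⟩ + b)))³ + λ·a². Then: (i) F(a,b,w) > 0 for all (a,b,w); (ii) the infimum of F over ℝ × ℝ × ℝ^{d} equals 0 (e.g., F(2·exp(−1/ε), 1/ε − ⟨w, x₁⟩, w) = 4λ·exp(−2/ε) → 0 as ε → 0⁺); and (iii) F has no local minimum point. -/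
open scoped RealInnerProductSpace

noncomputable section

set_option maxHeartbeats 1600000

/-- **Example 2.** For `λ > 0`, `d ≥ 1`, `x₁ ∈ ℝ^d` and
`F(a,b,w) = (max(0, 2 − a·exp(⟨w,x₁⟩ + b)))³ + λa²`: (i) `F > 0` everywhere;
(ii) the infimum of `F` over `ℝ × ℝ × ℝ^d` equals `0`; (iii) `F` has no local
minimum point. -/
theorem example_two
    (lam : ℝ) (hlam : 0 < lam) (d : ℕ) (hd : 1 ≤ d)
    (x₁ : EuclideanSpace ℝ (Fin d))
    (F : ℝ × ℝ × EuclideanSpace ℝ (Fin d) → ℝ)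
    (hF : ∀ (a b : ℝ) (w : EuclideanSpace ℝ (Fin d)),
      F (a, b, w) = (max 0 (2 - a * Real.exp (⟪w, x₁⟫ + b))) ^ 3 + lam * a ^ 2) :
    (∀ p : ℝ × ℝ × EuclideanSpace ℝ (Fin d), 0 < F p) ∧
    IsGLB (Set.range F) 0 ∧
    ∀ p : ℝ × ℝ × EuclideanSpace ℝ (Fin d), ¬ IsLocalMin F p := by
  have hpos : ∀ p : ℝ × ℝ × EuclideanSpace ℝ (Fin d), 0 < F p := by
    rintro ⟨a, b, w⟩
    rw [hF]
    rcases eq_or_ne a 0 with rfl | ha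
    · norm_num
    · have h1 : (0:ℝ) ≤ (max 0 (2 - a * Real.exp (⟪w, x₁⟫ + b))) ^ 3 := by positivity
      have h2 : 0 < lam * a ^ 2 := by positivity
      linarith
  refine ⟨hpos, ⟨?_, ?_⟩, ?_⟩
  · rintro y ⟨p, rfl⟩
    exact (hpos p).le
  · intro z hz
    by_contra hz0
    push_neg at hz0
    set t : ℝ := min 1 (z / (2 * lam)) with ht
    have ht0 : 0 < t := lt_min one_pos (by positivity)
    have hval : F (t, Real.log (2 / t) , 0) = lam * t ^ 2 := by
      rw [hF]
      have : ⟪(0 : EuclideanSpace ℝ (Fin d)), x₁⟫ = 0 := inner_zero_left x₁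
      rw [this, zero_add, Real.exp_log (by positivity)]
      rw [mul_div_cancel₀ 2 ht0.ne']
      norm_num
    have hle : z ≤ lam * t ^ 2 := hval ▸ hz ⟨_, rfl⟩
    have h1 : t ≤ 1 := min_le_left _ _
    have h2 : t ≤ z / (2 * lam) := min_le_right _ _
    have heq : lam * (z / (2 * lam)) = z / 2 := by field_simp
    have h3 : lam * t ≤ z / 2 := by nlinarith
    have h4 : lam * t ^ 2 ≤ lam * t := by nlinarith
    linarith
  · rintro ⟨a, b, w⟩ hmin
    rw [IsLocalMin, IsMinFilter, Metric.eventually_nhds_iff] at hmin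
    obtain ⟨ε, hε, h⟩ := hmin
    obtain ⟨E, hE, hEeq⟩ : ∃ E : ℝ, 0 < E ∧ Real.exp (⟪w, x₁⟫ + b) = E :=
      ⟨_, Real.exp_pos _, rfl⟩
    simp only [hF, hEeq] at h
    rcases lt_trichotomy a 0 with ha | rfl | ha
    · -- a < 0 : move a toward 0
      obtain ⟨δ, hδ, hδa, hδε⟩ : ∃ δ : ℝ, 0 < δ ∧ δ ≤ -a / 2 ∧ δ < ε := by
        refine ⟨min (-a) ε / 2, ?_, ?_, ?_⟩
        · have : 0 < min (-a) ε := lt_min (by linarith) hε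
          positivity
        · have := min_le_left (-a) ε; linarith
        · have := min_le_right (-a) ε; linarith
      have hdist : dist ((a + δ, b, w) : ℝ × ℝ × EuclideanSpace ℝ (Fin d)) (a, b, w) < ε := by
        rw [show dist ((a + δ, b, w) : ℝ × ℝ × EuclideanSpace ℝ (Fin d)) (a, b, w) = δ by
          simp [Prod.dist_eq, Real.dist_eq, abs_of_pos hδ, hδ.le]]
        exact hδε
      have hcomp := h hdist
      simp only [hEeq] at hcomp
      have hneg : a + δ < 0 := by linarith
      have hm1 : max 0 (2 - a * E) = 2 - a * E := max_eq_right (by nlinarith)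
      have hm2 : max 0 (2 - (a + δ) * E) = 2 - (a + δ) * E := max_eq_right (by nlinarith)
      rw [hm1, hm2] at hcomp
      have hc : (2 - (a + δ) * E) ^ 3 ≤ (2 - a * E) ^ 3 := by
        apply pow_le_pow_left₀ (by nlinarith) (by nlinarith)
      nlinarith [mul_pos hlam (mul_pos hδ (show (0:ℝ) < -2 * a - δ by linarith))]
    · -- a = 0
      obtain ⟨δ, hδ, hδ1, hδ2, hδε⟩ :
          ∃ δ : ℝ, 0 < δ ∧ δ * E ≤ 1 / 2 ∧ lam * δ ≤ E / 2 ∧ δ < ε := by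
        refine ⟨min (min (1 / E) (E / lam)) ε / 2, ?_, ?_, ?_, ?_⟩
        · have : 0 < min (min (1 / E) (E / lam)) ε :=
            lt_min (lt_min (by positivity) (by positivity)) hε
          positivity
        · have hm1 : min (min (1 / E) (E / lam)) ε ≤ 1 / E :=
            (min_le_left _ _).trans (min_le_left _ _)
          have := (le_div_iff₀ hE).mp hm1
          linarith
        · have hm2 : min (min (1 / E) (E / lam)) ε ≤ E / lam :=
            (min_le_left _ _).trans (min_le_right _ _)
          have h2' : min (min (1 / E) (E / lam)) ε * lam ≤ E := (le_div_iff₀ hlam).mp hm2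
          nlinarith
        · have := min_le_right (min (1 / E) (E / lam)) ε
          linarith
      have hdist : dist ((δ, b, w) : ℝ × ℝ × EuclideanSpace ℝ (Fin d)) (0, b, w) < ε := by
        rw [show dist ((δ, b, w) : ℝ × ℝ × EuclideanSpace ℝ (Fin d)) (0, b, w) = δ by
          simp [Prod.dist_eq, Real.dist_eq, abs_of_pos hδ, hδ.le]]
        exact hδε
      have hcomp := h hdist
      simp only [hEeq] at hcomp
      have hm1' : max 0 (2 - (0:ℝ) * E) = 2 := by norm_num
      have hm2' : max 0 (2 - δ * E) = 2 - δ * E := max_eq_right (by nlinarith)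
      rw [hm1', hm2'] at hcomp
      have ht : 0 < δ * E := by positivity
      have hq : lam * δ ^ 2 ≤ (δ * E) / 2 := by nlinarith
      nlinarith [mul_nonneg (show (0:ℝ) ≤ 1/2 - δ * E by linarith) ht.le,
        pow_pos ht 3]
    · -- a > 0
      rcases le_or_gt (2 - a * E) 0 with hma | hma
      · -- margin nonpositive: decrease a
        have hE3 : (0:ℝ) < E ^ 3 := by positivity
        obtain ⟨δ, hδ, hδ1, hδa, hδl, hδε⟩ :
            ∃ δ : ℝ, 0 < δ ∧ δ ≤ 1 / 2 ∧ δ ≤ a / 2 ∧ δ * E ^ 3 ≤ lam * a / 2 ∧ δ < ε := by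
          refine ⟨min (min 1 (min a (lam * a / E ^ 3))) ε / 2, ?_, ?_, ?_, ?_, ?_⟩
          · have : 0 < min (min 1 (min a (lam * a / E ^ 3))) ε :=
              lt_min (lt_min one_pos (lt_min ha (by positivity))) hε
            positivity
          · have : min (min 1 (min a (lam * a / E ^ 3))) ε ≤ 1 :=
              (min_le_left _ _).trans (min_le_left _ _)
            linarith
          · have : min (min 1 (min a (lam * a / E ^ 3))) ε ≤ a :=
              (min_le_left _ _).trans ((min_le_right _ _).trans (min_le_left _ _))
            linarith
          · have hml : min (min 1 (min a (lam * a / E ^ 3))) ε ≤ lam * a / E ^ 3 :=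
              (min_le_left _ _).trans ((min_le_right _ _).trans (min_le_right _ _))
            have := (le_div_iff₀ hE3).mp hml
            linarith
          · have := min_le_right (min 1 (min a (lam * a / E ^ 3))) ε
            linarith
        have hcube : (max 0 (2 - (a - δ) * E)) ^ 3 ≤ (δ * E) ^ 3 := by
          apply pow_le_pow_left₀ (le_max_left _ _)
          apply max_le (by positivity)
          nlinarith
        have k1 : δ ^ 3 * E ^ 3 ≤ δ ^ 2 * (lam * a / 2) := by
          nlinarith [mul_le_mul_of_nonneg_left hδl (sq_nonneg δ)]
        have k2 : δ ^ 2 * (lam * a / 2) ≤ δ * (lam * a / 4) := by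
          have hsq : δ ^ 2 ≤ δ / 2 := by nlinarith
          nlinarith [mul_pos hlam ha]
        have k3 : δ * (lam * a / 4) < lam * (2 * a * δ - δ ^ 2) := by
          have hsq2 : δ ^ 2 ≤ a * δ / 2 := by nlinarith
          nlinarith [mul_pos hlam (mul_pos ha hδ)]
        have hexp : (δ * E) ^ 3 = δ ^ 3 * E ^ 3 := by ring
        have hring : lam * (a - δ) ^ 2 = lam * a ^ 2 - lam * (2 * a * δ - δ ^ 2) := by ring
        have hdist : dist ((a - δ, b, w) : ℝ × ℝ × EuclideanSpace ℝ (Fin d)) (a, b, w) < ε := by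
          rw [show dist ((a - δ, b, w) : ℝ × ℝ × EuclideanSpace ℝ (Fin d)) (a, b, w) = δ by
            simp [Prod.dist_eq, Real.dist_eq, abs_sub_comm, abs_of_pos hδ, hδ.le]]
          exact hδε
        have hcomp := h hdist
        simp only [hEeq] at hcomp
        rw [max_eq_left hma] at hcomp
        linarith
      · -- positive margin: increase b
        have hs : 0 < ε / 2 := by positivity
        have hdist : dist ((a, b + ε / 2, w) : ℝ × ℝ × EuclideanSpace ℝ (Fin d)) (a, b, w) < ε := by
          rw [show dist ((a, b + ε / 2, w) : ℝ × ℝ × EuclideanSpace ℝ (Fin d)) (a, b, w) = ε / 2 by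
            simp [Prod.dist_eq, Real.dist_eq, abs_of_pos hs, abs_of_pos hε, hs.le, hε.le]]
          linarith
        have hcomp := h hdist
        simp only [] at hcomp
        have hexp : Real.exp (⟪w, x₁⟫ + (b + ε / 2)) = E * Real.exp (ε / 2) := by
          rw [← hEeq, ← Real.exp_add]; ring_nf
        have h1e : (1:ℝ) < Real.exp (ε / 2) := by
          rw [← Real.exp_zero]; exact Real.exp_lt_exp.mpr hs
        have hexpgt : E < E * Real.exp (ε / 2) := by nlinarith
        have hm1 : max 0 (2 - a * E) = 2 - a * E := max_eq_right hma.le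
        have hlt : max 0 (2 - a * (E * Real.exp (ε / 2))) < 2 - a * E := by
          apply max_lt hma
          nlinarith
        rw [hexp, hm1] at hcomp
        have hc : (max 0 (2 - a * (E * Real.exp (ε / 2)))) ^ 3 < (2 - a * E) ^ 3 :=
          pow_lt_pow_left₀ hlt (le_max_left _ _) (by norm_num)
        linarith
end
end
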